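/- arXiv:2507.00312 — 5 statements merged into one kernel-verified Lean document; each statement's English description precedes it below -/
import Mathlib

section
/- In the finite-state exogenous MDP, assume |η| ≤ B, the bounded-density assumption on the CADE, the Lipschitz assumption on stationary distributions, and the separation assumption with maximizer g* ∈ (0,1)^S; set π* := π_{τ,g*}. On a probability space, for each n ∈ ℕ let τ̂_n : Ω × X × S → ℝ be jointly measurable random CADE estimates such that almost surely the pushforward of P_X under x ↦ τ̂_n(ω,x,s) is atomless for every s, and such that sup_{x∈X, s∈S} |τ̂_n(ω,x,s) − τ(x,s)| = O_p(n^{−β}) for some β > 0. For g ∈ (0,1)^S define π_{τ̂_n,g}(x,s) := 1{τ̂_n(ω,x,s) > κ̂_{1−g_s}(s)}, where κ̂_m(s) is the m-quantile of the pushforward law of τ̂_n(ω,·,s) under P_X. Let V̂_n : Ω × (0,1)^S → ℝ be random functions with sup_{g∈(0,1)^S} |V̂_n(g) − μ(π_{τ̂_n,g})| = O_p(n^{−γ}) for some γ > 0, and let ĝ_n be random elements of (0,1)^S satisfying V̂_n(ĝ_n) ≥ sup_{g∈(0,1)^S} V̂_n(g) − Z_n with Z_n = O_p(n^{−β} + n^{−γ}).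 Then |μ(π_{τ̂_n,ĝ_n}) − μ(π*)| = O_p(n^{−β} + n^{−γ}). -/
open MeasureTheory

section Setup

variable {X : Type*} [MeasurableSpace X] {S : Type*} [Fintype S]

/-- A valid policy: measurable in the covariate for each state, `[0,1]`-valued. -/
def IsPolicy (π : X → S → ℝ) : Prop :=
  (∀ s : S, Measurable fun x => π x s) ∧ ∀ x s, π x s ∈ Set.Icc (0:ℝ) 1

/-- The transition matrix `M_π` induced by a policy `π`. -/
noncomputable def transMat (PX : Measure X) (PS : S → Bool → S → ℝ)
    (π : X → S → ℝ) (s s' : S) : ℝ :=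
  ∫ x, (π x s * PS s true s' + (1 - π x s) * PS s false s') ∂PX

/-- `d` is a stationary probability vector for `M_π`. -/
def IsStationaryVec (PX : Measure X) (PS : S → Bool → S → ℝ)
    (π : X → S → ℝ) (d : S → ℝ) : Prop :=
  (∀ s, 0 ≤ d s) ∧ (∑ s : S, d s = 1) ∧
    ∀ s' : S, ∑ s : S, d s * transMat PX PS π s s' = d s'

/-- The policy value `μ(π)`. -/
noncomputable def polValue (PX : Measure X) (η : Bool → X → S → ℝ)
    (dstat : (X → S → ℝ) → S → ℝ) (π : X → S → ℝ) : ℝ :=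
  ∑ s : S, dstat π s *
    ∫ x, (π x s * η true x s + (1 - π x s) * η false x s) ∂PX

/-- The `m`-quantile of the pushforward of `PX` under `f`:
`κ_m = inf {t : P_X(f ≤ t) ≥ m}`. -/
noncomputable def quantileOf (PX : Measure X) (f : X → ℝ) (m : ℝ) : ℝ :=
  sInf {t : ℝ | ENNReal.ofReal m ≤ PX {x | f x ≤ t}}

/-- The threshold policy `π_{τ,g}(x,s) = 1{τ(x,s) > κ_{1−g_s}(s)}`. -/
noncomputable def thresholdPolicy (PX : Measure X) (τ : X → S → ℝ)
    (g : S → ℝ) : X → S → ℝ :=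
  fun x s => if quantileOf PX (fun x' => τ x' s) (1 - g s) < τ x s then 1 else 0

/-- `g` lies in the open box `(0,1)^S`. -/
def InBox {S : Type*} (g : S → ℝ) : Prop := ∀ s, g s ∈ Set.Ioo (0:ℝ) 1

/-- `Z_n = O_p(a_n)`: for every `ε > 0` there are `M` and `N` such that
`P(|Z_n| > M a_n) ≤ ε` for all `n ≥ N`. -/
def IsBigOp {Ω : Type*} [MeasurableSpace Ω] (P : Measure Ω)
    (Z : ℕ → Ω → ℝ) (a : ℕ → ℝ) : Prop :=
  ∀ ε : ℝ, 0 < ε → ∃ (M : ℝ) (N : ℕ), ∀ n ≥ N,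
    P {ω | M * a n < |Z n ω|} ≤ ENNReal.ofReal ε

end Setup

section Aux
variable {X : Type*} [MeasurableSpace X] (PX : Measure X) [IsProbabilityMeasure PX]

lemma quantile_set_nonempty {h : X → ℝ} {m : ℝ} (hm1 : m < 1) :
    {t : ℝ | ENNReal.ofReal m ≤ PX {x | h x ≤ t}}.Nonempty := by
  by_contra hne
  rw [Set.not_nonempty_iff_eq_empty, Set.eq_empty_iff_forall_notMem] at hne
  have key : ∀ t : ℝ, PX {x | h x ≤ t} ≤ ENNReal.ofReal m :=
    fun t => (not_le.mp (hne t)).le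
  have hU : (⋃ k : ℕ, {x | h x ≤ (k : ℝ)}) = Set.univ := by
    ext x
    simp only [Set.mem_iUnion, Set.mem_setOf_eq, Set.mem_univ, iff_true]
    exact exists_nat_ge (h x)
  have hdir : Directed (fun a b : Set X => a ⊆ b) (fun k : ℕ => {x | h x ≤ (k : ℝ)}) := by
    apply Monotone.directed_le
    intro a b hab x hx
    simp only [Set.mem_setOf_eq] at hx ⊢
    have : (a : ℝ) ≤ (b : ℝ) := by exact_mod_cast hab
    linarith
  have h1 : (1 : ENNReal) ≤ ENNReal.ofReal m := by
    have := Directed.measure_iUnion (μ := PX) hdir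
    rw [hU, measure_univ] at this
    rw [this]; exact iSup_le fun k => key k
  exact absurd h1 (not_le.mpr (ENNReal.ofReal_lt_one.mpr hm1))

lemma quantile_set_bddBelow {h : X → ℝ} (hmeas : Measurable h) {m : ℝ} (hm0 : 0 < m) :
    BddBelow {t : ℝ | ENNReal.ofReal m ≤ PX {x | h x ≤ t}} := by
  have hI : (⋂ k : ℕ, {x | h x ≤ -(k : ℝ)}) = ∅ := by
    ext x
    simp only [Set.mem_iInter, Set.mem_setOf_eq, Set.mem_empty_iff_false, iff_false, not_forall]
    obtain ⟨k, hk⟩ := exists_nat_gt (-(h x))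
    exact ⟨k, by push_neg; linarith⟩
  have hmeask : ∀ k : ℕ, NullMeasurableSet {x | h x ≤ -(k : ℝ)} PX :=
    fun k => (hmeas measurableSet_Iic).nullMeasurableSet
  have hdir : Directed (fun a b : Set X => a ⊇ b) (fun k : ℕ => {x | h x ≤ -(k : ℝ)}) := by
    apply Antitone.directed_ge
    intro a b hab x hx
    simp only [Set.mem_setOf_eq] at hx ⊢
    have : (a : ℝ) ≤ (b : ℝ) := by exact_mod_cast hab
    linarith
  have hinf : (⨅ k : ℕ, PX {x | h x ≤ -(k : ℝ)}) = 0 := by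
    rw [← Directed.measure_iInter hmeask hdir ⟨0, measure_ne_top _ _⟩, hI, measure_empty]
  have hex : ∃ k : ℕ, PX {x | h x ≤ -(k : ℝ)} < ENNReal.ofReal m :=
    iInf_lt_iff.mp (hinf ▸ ENNReal.ofReal_pos.mpr hm0)
  obtain ⟨k, hk⟩ := hex
  refine ⟨-(k : ℝ), fun t ht => ?_⟩
  by_contra hc
  push_neg at hc
  refine absurd (le_trans ht (measure_mono fun x hx => ?_)) (not_le.mpr hk)
  simp only [Set.mem_setOf_eq] at hx ⊢
  linarith

lemma measure_le_quantile {h : X → ℝ} (hmeas : Measurable h) {m : ℝ} (hm0 : 0 < m) (hm1 : m < 1) :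
    ENNReal.ofReal m ≤ PX {x | h x ≤ quantileOf PX h m} := by
  set κ := quantileOf PX h m with hκ
  have hne := quantile_set_nonempty PX (h := h) hm1
  have hbdd := quantile_set_bddBelow PX hmeas hm0
  have hIeq : {x | h x ≤ κ} = ⋂ k : ℕ, {x | h x ≤ κ + 1 / ((k : ℝ) + 1)} := by
    ext x
    simp only [Set.mem_iInter, Set.mem_setOf_eq]
    constructor
    · intro hx k; have : (0:ℝ) < 1 / ((k:ℝ)+1) := by positivity
      linarith
    · intro hx
      by_contra hc
      push_neg at hc
      obtain ⟨k, hk⟩ := exists_nat_one_div_lt (sub_pos.mpr hc)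
      exact absurd (hx k) (by push_neg; linarith)
  have hmeask : ∀ k : ℕ, NullMeasurableSet {x | h x ≤ κ + 1 / ((k : ℝ) + 1)} PX :=
    fun k => (hmeas measurableSet_Iic).nullMeasurableSet
  have hdir : Directed (fun a b : Set X => a ⊇ b)
      (fun k : ℕ => {x | h x ≤ κ + 1 / ((k : ℝ) + 1)}) := by
    apply Antitone.directed_ge
    intro a b hab x hx
    simp only [Set.mem_setOf_eq] at hx ⊢
    have : 1 / ((b:ℝ)+1) ≤ 1 / ((a:ℝ)+1) := by
      apply one_div_le_one_div_of_le (by positivity)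
      exact_mod_cast add_le_add_left (Nat.cast_le.mpr hab) 1
    linarith
  have hkbound : ∀ k : ℕ, ENNReal.ofReal m ≤ PX {x | h x ≤ κ + 1 / ((k : ℝ) + 1)} := by
    intro k
    have hlt : κ < κ + 1 / ((k:ℝ)+1) := by
      have : (0:ℝ) < 1 / ((k:ℝ)+1) := by positivity
      linarith
    obtain ⟨t, ht, htlt⟩ := (csInf_lt_iff hbdd hne).mp hlt
    refine le_trans ht (measure_mono fun x hx => ?_)
    simp only [Set.mem_setOf_eq] at hx ⊢
    linarith
  rw [hIeq, Directed.measure_iInter hmeask hdir ⟨0, measure_ne_top _ _⟩]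
  exact le_iInf hkbound

lemma measure_lt_of_lt_quantile {h : X → ℝ} (hmeas : Measurable h) {m t : ℝ}
    (hm0 : 0 < m) (ht : t < quantileOf PX h m) :
    PX {x | h x ≤ t} < ENNReal.ofReal m := by
  by_contra hc
  push_neg at hc
  exact absurd (csInf_le (quantile_set_bddBelow PX hmeas hm0) hc) (not_le.mpr ht)

lemma quantile_le_of_measure {h : X → ℝ} (hmeas : Measurable h) {m t : ℝ}
    (hm0 : 0 < m) (ht : ENNReal.ofReal m ≤ PX {x | h x ≤ t}) :
    quantileOf PX h m ≤ t :=
  csInf_le (quantile_set_bddBelow PX hmeas hm0) ht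

lemma cdf_at_quantile_le {h : X → ℝ} (hmeas : Measurable h) {m : ℝ} (hm0 : 0 < m)
    (hatom : PX {x | h x = quantileOf PX h m} = 0) :
    PX {x | h x ≤ quantileOf PX h m} ≤ ENNReal.ofReal m := by
  set κ := quantileOf PX h m with hκ
  have hsub : {x | h x ≤ κ} ⊆ {x | h x < κ} ∪ {x | h x = κ} := by
    intro x (hx : h x ≤ κ)
    rcases lt_or_eq_of_le hx with h1 | h1
    · exact Or.inl h1
    · exact Or.inr h1
  have hU : {x | h x < κ} = ⋃ k : ℕ, {x | h x ≤ κ - 1 / ((k : ℝ) + 1)} := by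
    ext x
    simp only [Set.mem_iUnion, Set.mem_setOf_eq]
    constructor
    · intro hx
      obtain ⟨k, hk⟩ := exists_nat_one_div_lt (sub_pos.mpr hx)
      exact ⟨k, by linarith⟩
    · rintro ⟨k, hk⟩
      have : (0:ℝ) < 1 / ((k:ℝ)+1) := by positivity
      linarith
  have hdir : Directed (fun a b : Set X => a ⊆ b)
      (fun k : ℕ => {x | h x ≤ κ - 1 / ((k : ℝ) + 1)}) := by
    apply Monotone.directed_le
    intro a b hab x hx
    simp only [Set.mem_setOf_eq] at hx ⊢
    have : 1 / ((b:ℝ)+1) ≤ 1 / ((a:ℝ)+1) := by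
      apply one_div_le_one_div_of_le (by positivity)
      exact_mod_cast add_le_add_left (Nat.cast_le.mpr hab) 1
    linarith
  have hlt : PX {x | h x < κ} ≤ ENNReal.ofReal m := by
    rw [hU, Directed.measure_iUnion hdir]
    refine iSup_le fun k => ?_
    have hklt : κ - 1 / ((k:ℝ)+1) < κ := by
      have : (0:ℝ) < 1 / ((k:ℝ)+1) := by positivity
      linarith
    exact (measure_lt_of_lt_quantile PX hmeas hm0 hklt).le
  calc PX {x | h x ≤ κ} ≤ PX {x | h x < κ} + PX {x | h x = κ} :=
        le_trans (measure_mono hsub) (measure_union_le _ _)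
    _ ≤ ENNReal.ofReal m + 0 := add_le_add hlt (le_of_eq hatom)
    _ = ENNReal.ofReal m := add_zero _

end Aux


section Aux2
variable {X : Type*} [MeasurableSpace X] (PX : Measure X) [IsProbabilityMeasure PX]

lemma measure_band_le {f : X → ℝ} (hf : Measurable f) {dns : ℝ → ℝ} {Mh : ℝ}
    (hub : ∀ t, dns t ≤ Mh) (hM0 : 0 ≤ Mh)
    (hmap : PX.map f = MeasureTheory.volume.withDensity fun t => ENNReal.ofReal (dns t))
    (a b : ℝ) :
    PX {x | a < f x ∧ f x ≤ b} ≤ ENNReal.ofReal (Mh * (b - a)) := by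
  rcases le_or_gt b a with hab | hab
  · have : {x | a < f x ∧ f x ≤ b} = ∅ := by
      ext x; simp only [Set.mem_setOf_eq, Set.mem_empty_iff_false, iff_false, not_and, not_le]
      intro h1; linarith
    rw [this, measure_empty]; exact zero_le
  · have hpre : {x | a < f x ∧ f x ≤ b} = f ⁻¹' Set.Ioc a b := by
      ext x; simp [Set.mem_Ioc]
    rw [hpre, ← Measure.map_apply hf measurableSet_Ioc, hmap,
      withDensity_apply _ measurableSet_Ioc]
    calc ∫⁻ t in Set.Ioc a b, ENNReal.ofReal (dns t)
        ≤ ∫⁻ _t in Set.Ioc a b, ENNReal.ofReal Mh :=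
          setLIntegral_mono measurable_const fun t _ => ENNReal.ofReal_le_ofReal (hub t)
      _ = ENNReal.ofReal Mh * MeasureTheory.volume (Set.Ioc a b) := setLIntegral_const _ _
      _ = ENNReal.ofReal (Mh * (b - a)) := by
          rw [Real.volume_Ioc, ← ENNReal.ofReal_mul hM0]

lemma measure_atom_zero {f : X → ℝ} (hf : Measurable f) {dns : ℝ → ℝ}
    (hmap : PX.map f = MeasureTheory.volume.withDensity fun t => ENNReal.ofReal (dns t))
    (t : ℝ) : PX {x | f x = t} = 0 := by
  have hpre : {x | f x = t} = f ⁻¹' {t} := rfl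
  rw [hpre, ← Measure.map_apply hf (measurableSet_singleton t), hmap]
  exact (withDensity_absolutelyContinuous MeasureTheory.volume _) (Real.volume_singleton)

/-- Key symmetric-difference bound for threshold policies. -/
lemma policy_diff_measure_le
    {f g : X → ℝ} (hf : Measurable f) (hg : Measurable g)
    {Δ : ℝ} (hΔ : 0 ≤ Δ) (hfg : ∀ x, |g x - f x| ≤ Δ)
    {m : ℝ} (hm0 : 0 < m) (hm1 : m < 1)
    {dns : ℝ → ℝ} {Mh : ℝ} (hub : ∀ t, dns t ≤ Mh) (hM0 : 0 ≤ Mh)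
    (hmap : PX.map f = MeasureTheory.volume.withDensity fun t => ENNReal.ofReal (dns t))
    (hat : ∀ t : ℝ, PX {x | g x = t} = 0) :
    PX {x | (if quantileOf PX g m < g x then (1:ℝ) else 0) ≠
        (if quantileOf PX f m < f x then (1:ℝ) else 0)} ≤
      ENNReal.ofReal (4 * Mh * Δ) := by
  set κ := quantileOf PX f m with hκdef
  set κh := quantileOf PX g m with hκhdef
  have hFκ : ENNReal.ofReal m ≤ PX {x | f x ≤ κ} := measure_le_quantile PX hf hm0 hm1
  have hGκh : ENNReal.ofReal m ≤ PX {x | g x ≤ κh} := measure_le_quantile PX hg hm0 hm1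
  have hGκh' : PX {x | g x ≤ κh} ≤ ENNReal.ofReal m := cdf_at_quantile_le PX hg hm0 (hat κh)
  -- κ ≤ κh + Δ
  have hκle : κ ≤ κh + Δ := by
    refine quantile_le_of_measure PX hf hm0 (le_trans hGκh (measure_mono fun x hx => ?_))
    simp only [Set.mem_setOf_eq] at hx ⊢
    have := abs_le.mp (hfg x)
    linarith
  -- decomposition of the disagreement set
  have hsub : {x | (if κh < g x then (1:ℝ) else 0) ≠ (if κ < f x then (1:ℝ) else 0)} ⊆
      {x | κh - Δ < f x ∧ f x ≤ κh + Δ} ∪ {x | κ < f x ∧ f x ≤ κh - Δ} := by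
    intro x hx
    simp only [Set.mem_setOf_eq] at hx
    have habs := abs_le.mp (hfg x)
    by_cases h1 : κh < g x <;> by_cases h2 : κ < f x <;>
      simp only [h1, h2, if_true, if_false, ne_eq, if_pos, if_neg] at hx
    · exact absurd trivial hx
    · -- κh < g x, f x ≤ κ : f x > κh - Δ and f x ≤ κ ≤ κh + Δ
      push_neg at h2
      exact Or.inl ⟨by linarith, by linarith⟩
    · -- g x ≤ κh, κ < f x : f x ≤ g x + Δ ≤ κh + Δ
      push_neg at h1
      rcases le_or_gt (f x) (κh - Δ) with hc | hc
      · exact Or.inr ⟨h2, hc⟩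
      · exact Or.inl ⟨hc, by linarith⟩
    · exact absurd trivial hx
  have hband : PX {x | κh - Δ < f x ∧ f x ≤ κh + Δ} ≤ ENNReal.ofReal (Mh * (2 * Δ)) := by
    have := measure_band_le PX hf hub hM0 hmap (κh - Δ) (κh + Δ)
    have heq : κh + Δ - (κh - Δ) = 2 * Δ := by ring
    rwa [heq] at this
  have hzero : PX {x | κ < f x ∧ f x ≤ κh - Δ} = 0 := by
    rcases le_or_gt (κh - Δ) κ with hc | hc
    · have : {x | κ < f x ∧ f x ≤ κh - Δ} = ∅ := by
        ext x; simp only [Set.mem_setOf_eq, Set.mem_empty_iff_false, iff_false, not_and, not_le]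
        intro h1; linarith
      rw [this, measure_empty]
    · -- κ < κh - Δ
      have hdisj : Disjoint {x | κ < f x ∧ f x ≤ κh - Δ} {x | f x ≤ κ} := by
        rw [Set.disjoint_left]
        intro x hx1 hx2
        simp only [Set.mem_setOf_eq] at hx1 hx2
        linarith [hx1.1]
      have hunion : {x | κ < f x ∧ f x ≤ κh - Δ} ∪ {x | f x ≤ κ} = {x | f x ≤ κh - Δ} := by
        ext x
        simp only [Set.mem_union, Set.mem_setOf_eq]
        constructor
        · rintro (⟨_, h2⟩ | h1)
          · exact h2
          · linarith
        · intro h1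
          rcases le_or_gt (f x) κ with h2 | h2
          · exact Or.inr h2
          · exact Or.inl ⟨h2, h1⟩
      have hmeas2 : MeasurableSet {x | f x ≤ κ} := hf measurableSet_Iic
      have hsum : PX {x | κ < f x ∧ f x ≤ κh - Δ} + PX {x | f x ≤ κ} =
          PX {x | f x ≤ κh - Δ} := by
        rw [← measure_union hdisj hmeas2, hunion]
      have hsmall : PX {x | f x ≤ κh - Δ} ≤ ENNReal.ofReal m := by
        refine le_trans (measure_mono fun x hx => ?_) hGκh'
        simp only [Set.mem_setOf_eq] at hx ⊢
        have := abs_le.mp (hfg x)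
        linarith
      have hkey : PX {x | κ < f x ∧ f x ≤ κh - Δ} + PX {x | f x ≤ κ} ≤
          0 + PX {x | f x ≤ κ} := by
        rw [hsum, zero_add]
        exact le_trans hsmall hFκ
      have := (ENNReal.add_le_add_iff_right (measure_ne_top PX _)).mp hkey
      exact le_antisymm this zero_le
  calc PX {x | (if κh < g x then (1:ℝ) else 0) ≠ (if κ < f x then (1:ℝ) else 0)}
      ≤ PX ({x | κh - Δ < f x ∧ f x ≤ κh + Δ} ∪ {x | κ < f x ∧ f x ≤ κh - Δ}) :=
        measure_mono hsub
    _ ≤ PX {x | κh - Δ < f x ∧ f x ≤ κh + Δ} + PX {x | κ < f x ∧ f x ≤ κh - Δ} :=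
        measure_union_le _ _
    _ ≤ ENNReal.ofReal (Mh * (2 * Δ)) + 0 := add_le_add hband (le_of_eq hzero)
    _ ≤ ENNReal.ofReal (4 * Mh * Δ) := by
        rw [add_zero]
        exact ENNReal.ofReal_le_ofReal (by nlinarith)
end Aux2

section Aux3
variable {X : Type*} [MeasurableSpace X] (PX : Measure X) [IsProbabilityMeasure PX]
variable {S : Type*} [Fintype S] [Nonempty S]

lemma integrable_of_abs_bounded {h : X → ℝ} (hm : Measurable h) {C : ℝ} (hb : ∀ x, |h x| ≤ C) :
    Integrable h PX :=
  (integrable_const C).mono' hm.aestronglyMeasurable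
    (Filter.Eventually.of_forall fun x => by simpa [Real.norm_eq_abs] using hb x)

end Aux3
lemma nonempty_of_prob {Y : Type*} [MeasurableSpace Y] (PX : Measure Y)
    [IsProbabilityMeasure PX] : Nonempty Y := by
  by_contra hc
  rw [not_nonempty_iff] at hc
  have h0 : PX Set.univ = 0 := by rw [Set.univ_eq_empty_iff.mpr hc, measure_empty]
  rw [measure_univ] at h0
  exact one_ne_zero h0
section Aux3B
variable {X : Type*} [MeasurableSpace X] (PX : Measure X) [IsProbabilityMeasure PX]
variable {S : Type*} [Fintype S] [Nonempty S]

lemma value_diff_bound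
    (η : Bool → X → S → ℝ) (hη_meas : ∀ w s, Measurable fun x => η w x s)
    {B : ℝ} (hη_bdd : ∀ w x s, |η w x s| ≤ B)
    (dstat : (X → S → ℝ) → S → ℝ)
    {π π' : X → S → ℝ} (hπ : IsPolicy π) (hπ' : IsPolicy π')
    (hd_pos' : ∀ s, 0 ≤ dstat π' s) (hd_sum' : (∑ s : S, dstat π' s) = 1)
    (Ld : ℝ)
    (hLip : ∀ s : S, |dstat π s - dstat π' s| ≤
        Ld * Finset.univ.sup' Finset.univ_nonempty
          (fun s' : S => |(∫ x, π x s' ∂PX) - ∫ x, π' x s' ∂PX|))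
    {D : ℝ} (hD : 0 ≤ D)
    (hdiff : ∀ s : S, PX {x | π x s ≠ π' x s} ≤ ENNReal.ofReal D) :
    |polValue PX η dstat π - polValue PX η dstat π'| ≤
      ((Fintype.card S : ℝ) * (max Ld 0 * B + 2 * B)) * D := by
  obtain ⟨x₀⟩ := nonempty_of_prob PX
  have hB : 0 ≤ B := le_trans (abs_nonneg _) (hη_bdd true x₀ (Classical.arbitrary S))
  have hptwise : ∀ (p : X → S → ℝ), IsPolicy p → ∀ s x,
      |p x s * η true x s + (1 - p x s) * η false x s| ≤ B := by
    intro p hp s x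
    obtain ⟨hp0, hp1⟩ := hp.2 x s
    have h1 := abs_le.mp (hη_bdd true x s)
    have h2 := abs_le.mp (hη_bdd false x s)
    rw [abs_le]
    constructor <;> nlinarith [h1.1, h1.2, h2.1, h2.2]
  have hmeasI : ∀ (p : X → S → ℝ), IsPolicy p → ∀ s : S,
      Measurable (fun x => p x s * η true x s + (1 - p x s) * η false x s) :=
    fun p hp s => ((hp.1 s).mul (hη_meas true s)).add
      ((measurable_const.sub (hp.1 s)).mul (hη_meas false s))
  have hintegI : ∀ (p : X → S → ℝ), IsPolicy p → ∀ s : S,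
      Integrable (fun x => p x s * η true x s + (1 - p x s) * η false x s) PX :=
    fun p hp s => integrable_of_abs_bounded PX (hmeasI p hp s) (hptwise p hp s)
  have hIb : ∀ (p : X → S → ℝ), IsPolicy p → ∀ s,
      |∫ x, (p x s * η true x s + (1 - p x s) * η false x s) ∂PX| ≤ B := by
    intro p hp s
    have := norm_integral_le_of_norm_le_const (μ := PX)
      (f := fun x => p x s * η true x s + (1 - p x s) * η false x s) (C := B)
      (Filter.Eventually.of_forall fun x => by
        rw [Real.norm_eq_abs]; exact hptwise p hp s x)
    rwa [probReal_univ, mul_one, Real.norm_eq_abs] at this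
  have hEmeas : ∀ s : S, MeasurableSet {x | π x s ≠ π' x s} := by
    intro s
    have heq : {x | π x s ≠ π' x s} = (fun x => π x s - π' x s) ⁻¹' ({0}ᶜ) := by
      ext x; simp [sub_eq_zero]
    rw [heq]
    exact ((hπ.1 s).sub (hπ'.1 s)) (measurableSet_singleton 0).compl
  have hPE : ∀ s : S, (PX {x | π x s ≠ π' x s}).toReal ≤ D :=
    fun s => ENNReal.toReal_le_of_le_ofReal hD (hdiff s)
  -- generic bound : |∫ φ| ≤ C * D for φ vanishing off the disagreement set, |φ| ≤ C there
  have key : ∀ (s : S) (φ : X → ℝ) (C : ℝ), 0 ≤ C → Measurable φ →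
      (∀ x, |φ x| ≤ C) → (∀ x, π x s = π' x s → φ x = 0) →
      |∫ x, φ x ∂PX| ≤ C * D := by
    intro s φ C hC hφm hφb hφ0
    have hφint : Integrable φ PX := integrable_of_abs_bounded PX hφm hφb
    have hptw : ∀ x, |φ x| ≤ Set.indicator {x | π x s ≠ π' x s} (fun _ => C) x := by
      intro x
      by_cases hx : π x s = π' x s
      · have : φ x = 0 := hφ0 x hx
        rw [this, abs_zero]
        exact Set.indicator_nonneg (fun _ _ => hC) x
      · rw [Set.indicator_of_mem (show x ∈ {x | π x s ≠ π' x s} from hx)]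
        exact hφb x
    have h1 : |∫ x, φ x ∂PX| ≤ ∫ x, |φ x| ∂PX := by
      rw [← Real.norm_eq_abs (∫ x, φ x ∂PX)]
      exact le_trans (norm_integral_le_integral_norm φ)
        (le_of_eq (by congr 1))
    have h2 : ∫ x, |φ x| ∂PX ≤
        ∫ x, Set.indicator {x | π x s ≠ π' x s} (fun _ => C) x ∂PX :=
      integral_mono hφint.abs ((integrable_const C).indicator (hEmeas s)) hptw
    have h3 : ∫ x, Set.indicator {x | π x s ≠ π' x s} (fun _ => C) x ∂PX =
        (PX {x | π x s ≠ π' x s}).toReal * C := by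
      rw [integral_indicator_const C (hEmeas s), smul_eq_mul]; rfl
    have h4 : (PX {x | π x s ≠ π' x s}).toReal * C ≤ D * C :=
      mul_le_mul_of_nonneg_right (hPE s) hC
    calc |∫ x, φ x ∂PX| ≤ ∫ x, |φ x| ∂PX := h1
      _ ≤ _ := h2
      _ = _ := h3
      _ ≤ D * C := h4
      _ = C * D := mul_comm _ _
  -- bound on difference of integrands
  have hII : ∀ s : S,
      |(∫ x, (π x s * η true x s + (1 - π x s) * η false x s) ∂PX) -
        ∫ x, (π' x s * η true x s + (1 - π' x s) * η false x s) ∂PX| ≤ 2 * B * D := by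
    intro s
    have heq : (∫ x, (π x s * η true x s + (1 - π x s) * η false x s) ∂PX) -
        ∫ x, (π' x s * η true x s + (1 - π' x s) * η false x s) ∂PX =
        ∫ x, (π x s - π' x s) * (η true x s - η false x s) ∂PX := by
      rw [← integral_sub (hintegI π hπ s) (hintegI π' hπ' s)]
      congr 1; funext x; ring
    rw [heq]
    refine key s _ (2 * B) (by linarith) ?_ ?_ ?_
    · exact ((hπ.1 s).sub (hπ'.1 s)).mul ((hη_meas true s).sub (hη_meas false s))
    · intro x
      obtain ⟨ha0, ha1⟩ := hπ.2 x s
      obtain ⟨hb0, hb1⟩ := hπ'.2 x s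
      have h1 := abs_le.mp (hη_bdd true x s)
      have h2 := abs_le.mp (hη_bdd false x s)
      rw [abs_mul]
      have e1 : |π x s - π' x s| ≤ 1 := by rw [abs_le]; constructor <;> linarith
      have e2 : |η true x s - η false x s| ≤ 2 * B := by
        rw [abs_le]; constructor <;> linarith
      calc |π x s - π' x s| * |η true x s - η false x s| ≤ 1 * (2 * B) :=
            mul_le_mul e1 e2 (abs_nonneg _) zero_le_one
        _ = 2 * B := one_mul _
    · intro x hx; rw [hx, sub_self, zero_mul]
  -- bound on difference of mean policies
  have hint : ∀ s : S, |(∫ x, π x s ∂PX) - ∫ x, π' x s ∂PX| ≤ D := by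
    intro s
    have hi1 : Integrable (fun x => π x s) PX :=
      integrable_of_abs_bounded PX (hπ.1 s) (C := 1) (fun x => by
        obtain ⟨h0, h1⟩ := hπ.2 x s; rw [abs_le]; constructor <;> linarith)
    have hi2 : Integrable (fun x => π' x s) PX :=
      integrable_of_abs_bounded PX (hπ'.1 s) (C := 1) (fun x => by
        obtain ⟨h0, h1⟩ := hπ'.2 x s; rw [abs_le]; constructor <;> linarith)
    have heq : (∫ x, π x s ∂PX) - ∫ x, π' x s ∂PX = ∫ x, (π x s - π' x s) ∂PX :=
      (integral_sub hi1 hi2).symm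
    rw [heq]
    have := key s (fun x => π x s - π' x s) 1 zero_le_one
      ((hπ.1 s).sub (hπ'.1 s))
      (fun x => by
        obtain ⟨ha0, ha1⟩ := hπ.2 x s
        obtain ⟨hb0, hb1⟩ := hπ'.2 x s
        show |π x s - π' x s| ≤ 1
        rw [abs_le]; constructor <;> linarith)
      (fun x hx => by show π x s - π' x s = 0; rw [hx, sub_self])
    rwa [one_mul] at this
  -- sup' bound
  have hsup : Finset.univ.sup' Finset.univ_nonempty
      (fun s' : S => |(∫ x, π x s' ∂PX) - ∫ x, π' x s' ∂PX|) ≤ D :=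
    Finset.sup'_le _ _ fun s _ => hint s
  have hsup0 : 0 ≤ Finset.univ.sup' Finset.univ_nonempty
      (fun s' : S => |(∫ x, π x s' ∂PX) - ∫ x, π' x s' ∂PX|) :=
    le_trans (abs_nonneg _)
      (Finset.le_sup' (fun s' : S => |(∫ x, π x s' ∂PX) - ∫ x, π' x s' ∂PX|)
        (Finset.mem_univ (Classical.arbitrary S)))
  have hdd : ∀ s : S, |dstat π s - dstat π' s| ≤ max Ld 0 * D := by
    intro s
    calc |dstat π s - dstat π' s| ≤ Ld * _ := hLip s
      _ ≤ max Ld 0 * Finset.univ.sup' Finset.univ_nonempty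
          (fun s' : S => |(∫ x, π x s' ∂PX) - ∫ x, π' x s' ∂PX|) :=
        mul_le_mul_of_nonneg_right (le_max_left _ _) hsup0
      _ ≤ max Ld 0 * D := mul_le_mul_of_nonneg_left hsup (le_max_right Ld 0)
  have hd'le1 : ∀ s : S, dstat π' s ≤ 1 := by
    intro s
    rw [← hd_sum']
    exact Finset.single_le_sum (fun i _ => hd_pos' i) (Finset.mem_univ s)
  -- assemble
  have hsplit : polValue PX η dstat π - polValue PX η dstat π' =
      ∑ s : S, (dstat π s * (∫ x, (π x s * η true x s + (1 - π x s) * η false x s) ∂PX) -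
        dstat π' s * ∫ x, (π' x s * η true x s + (1 - π' x s) * η false x s) ∂PX) := by
    rw [polValue, polValue, ← Finset.sum_sub_distrib]
  rw [hsplit]
  refine le_trans (Finset.abs_sum_le_sum_abs _ _) ?_
  have hterm : ∀ s : S,
      |dstat π s * (∫ x, (π x s * η true x s + (1 - π x s) * η false x s) ∂PX) -
        dstat π' s * ∫ x, (π' x s * η true x s + (1 - π' x s) * η false x s) ∂PX| ≤
      (max Ld 0 * B + 2 * B) * D := by
    intro s
    set Iπ := ∫ x, (π x s * η true x s + (1 - π x s) * η false x s) ∂PX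
    set Iπ' := ∫ x, (π' x s * η true x s + (1 - π' x s) * η false x s) ∂PX
    have hre : dstat π s * Iπ - dstat π' s * Iπ' =
        (dstat π s - dstat π' s) * Iπ + dstat π' s * (Iπ - Iπ') := by ring
    rw [hre]
    have e1 : |(dstat π s - dstat π' s) * Iπ| ≤ (max Ld 0 * D) * B := by
      rw [abs_mul]
      exact mul_le_mul (hdd s) (hIb π hπ s) (abs_nonneg _)
        (mul_nonneg (le_max_right Ld 0) hD)
    have e2 : |dstat π' s * (Iπ - Iπ')| ≤ 1 * (2 * B * D) := by
      rw [abs_mul, abs_of_nonneg (hd_pos' s)]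
      exact mul_le_mul (hd'le1 s) (hII s) (abs_nonneg _) zero_le_one
    calc |(dstat π s - dstat π' s) * Iπ + dstat π' s * (Iπ - Iπ')| ≤
          |(dstat π s - dstat π' s) * Iπ| + |dstat π' s * (Iπ - Iπ')| := abs_add_le _ _
      _ ≤ (max Ld 0 * D) * B + 1 * (2 * B * D) := add_le_add e1 e2
      _ = (max Ld 0 * B + 2 * B) * D := by ring
  calc ∑ s : S, |dstat π s * (∫ x, (π x s * η true x s + (1 - π x s) * η false x s) ∂PX) -
        dstat π' s * ∫ x, (π' x s * η true x s + (1 - π' x s) * η false x s) ∂PX| ≤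
      ∑ _s : S, (max Ld 0 * B + 2 * B) * D := Finset.sum_le_sum fun s _ => hterm s
    _ = ((Fintype.card S : ℝ) * (max Ld 0 * B + 2 * B)) * D := by
      rw [Finset.sum_const, Finset.card_univ, nsmul_eq_mul]; ring
end Aux3B


section Aux4
variable {X : Type*} [MeasurableSpace X] (PX : Measure X) {S : Type*} [Fintype S]

lemma thresholdPolicy_isPolicy (t : X → S → ℝ) (ht : ∀ s : S, Measurable fun x => t x s)
    (g : S → ℝ) : IsPolicy (thresholdPolicy PX t g) := by
  constructor
  · intro s
    exact Measurable.ite (measurableSet_lt measurable_const (ht s))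
      measurable_const measurable_const
  · intro x s
    unfold thresholdPolicy
    split <;> constructor <;> norm_num
end Aux4



/-- Proposition 2, consistency of Algorithm 1, sup-norm version. -/
theorem learned_policy_value_consistency_sup
    {X : Type*} [MeasurableSpace X] (PX : Measure X) [IsProbabilityMeasure PX]
    {S : Type*} [Fintype S] [Nonempty S]
    (PS : S → Bool → S → ℝ)
    (hPS_nonneg : ∀ s w s', 0 ≤ PS s w s')
    (hPS_sum : ∀ s w, ∑ s' : S, PS s w s' = 1)
    (η : Bool → X → S → ℝ)
    (hη_meas : ∀ w s, Measurable fun x => η w x s)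
    (B : ℝ) (hη_bdd : ∀ w x s, |η w x s| ≤ B)
    (dstat : (X → S → ℝ) → S → ℝ)
    (hd_stat : ∀ π : X → S → ℝ, IsPolicy π → IsStationaryVec PX PS π (dstat π))
    (hd_uniq : ∀ π : X → S → ℝ, IsPolicy π →
      ∀ d : S → ℝ, IsStationaryVec PX PS π d → d = dstat π)
    -- the CADE
    (τ : X → S → ℝ) (hτ : ∀ x s, τ x s = η true x s - η false x s)
    -- bounded-density assumption on the CADE
    (mlow Mhigh : ℝ) (hmlow : 0 < mlow)
    (dens : S → ℝ → ℝ) (hdens_meas : ∀ s, Measurable (dens s))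
    (hdens_nonneg : ∀ s t, 0 ≤ dens s t)
    (hdens : ∀ s : S, PX.map (fun x => τ x s) =
      MeasureTheory.volume.withDensity fun t => ENNReal.ofReal (dens s t))
    (hdens_ub : ∀ s t, dens s t ≤ Mhigh)
    (hdens_lb : ∀ s t, dens s t = 0 ∨ mlow ≤ dens s t)
    -- Lipschitz assumption on stationary distributions
    (Ld : ℝ)
    (hLip : ∀ π π' : X → S → ℝ, IsPolicy π → IsPolicy π' → ∀ s : S,
      |dstat π s - dstat π' s| ≤
        Ld * Finset.univ.sup' Finset.univ_nonempty
          (fun s' : S => |(∫ x, π x s' ∂PX) - ∫ x, π' x s' ∂PX|))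
    -- separation assumption with maximizer g*
    (gstar : S → ℝ) (hgstar : InBox gstar)
    (hmax : ∀ g : S → ℝ, InBox g →
      polValue PX η dstat (thresholdPolicy PX τ g) ≤
        polValue PX η dstat (thresholdPolicy PX τ gstar))
    (hsep : ∀ ε : ℝ, 0 < ε → ∃ δ : ℝ, 0 < δ ∧
      ∀ g : S → ℝ, InBox g → (∃ s : S, ε ≤ |g s - gstar s|) →
        polValue PX η dstat (thresholdPolicy PX τ g) ≤
          polValue PX η dstat (thresholdPolicy PX τ gstar) - δ)
    -- probability space carrying the estimates
    {Ω : Type*} [MeasurableSpace Ω] (P : Measure Ω) [IsProbabilityMeasure P]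
    (β γ : ℝ) (hβ : 0 < β) (hγ : 0 < γ)
    -- random CADE estimates
    (τhat : ℕ → Ω → X → S → ℝ)
    (hτhat_meas : ∀ (n : ℕ) (s : S),
      Measurable fun q : Ω × X => τhat n q.1 q.2 s)
    (hτhat_atomless : ∀ n : ℕ, ∀ᵐ ω ∂P, ∀ (s : S) (t : ℝ),
      PX {x | τhat n ω x s = t} = 0)
    (hτhat_rate : ∀ ε : ℝ, 0 < ε → ∃ (M : ℝ) (N : ℕ), ∀ n ≥ N,
      P {ω | ∃ (x : X) (s : S),
          M * (n : ℝ) ^ (-β) < |τhat n ω x s - τ x s|} ≤ ENNReal.ofReal ε)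
    -- off-policy value estimates, uniformly consistent at rate n^{-γ}
    (Vhat : ℕ → Ω → (S → ℝ) → ℝ)
    (hVhat_rate : ∀ ε : ℝ, 0 < ε → ∃ (M : ℝ) (N : ℕ), ∀ n ≥ N,
      P {ω | ∃ g : S → ℝ, InBox g ∧
          M * (n : ℝ) ^ (-γ) <
            |Vhat n ω g -
              polValue PX η dstat (thresholdPolicy PX (τhat n ω) g)|}
        ≤ ENNReal.ofReal ε)
    -- near-maximizers of the off-policy value estimates
    (ghat : ℕ → Ω → S → ℝ) (hghat_box : ∀ n ω, InBox (ghat n ω))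
    (Z : ℕ → Ω → ℝ)
    (hZ : IsBigOp P Z (fun n => (n : ℝ) ^ (-β) + (n : ℝ) ^ (-γ)))
    (hghat_max : ∀ (n : ℕ) (ω : Ω) (g : S → ℝ), InBox g →
      Vhat n ω g - Z n ω ≤ Vhat n ω (ghat n ω)) :
    IsBigOp P
      (fun n ω =>
        polValue PX η dstat (thresholdPolicy PX (τhat n ω) (ghat n ω)) -
          polValue PX η dstat (thresholdPolicy PX τ gstar))
      (fun n => (n : ℝ) ^ (-β) + (n : ℝ) ^ (-γ)) := by
  -- measurability of the CADE and its estimates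
  have hτmeas : ∀ s : S, Measurable fun x => τ x s := by
    intro s
    have heq : (fun x => τ x s) = fun x => η true x s - η false x s :=
      funext fun x => hτ x s
    rw [heq]
    exact (hη_meas true s).sub (hη_meas false s)
  have hτhatmeas : ∀ (n : ℕ) (ω : Ω) (s : S), Measurable fun x => τhat n ω x s :=
    fun n ω s => (hτhat_meas n s).comp measurable_prodMk_left
  have hMh0 : 0 ≤ Mhigh :=
    le_trans (hdens_nonneg (Classical.arbitrary S) 0) (hdens_ub _ 0)
  obtain ⟨x₀⟩ := nonempty_of_prob PX
  have hB0 : 0 ≤ B := le_trans (abs_nonneg _) (hη_bdd true x₀ (Classical.arbitrary S))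
  set C : ℝ := ((Fintype.card S : ℝ) * (max Ld 0 * B + 2 * B)) * (4 * Mhigh) with hCdef
  have hC0 : 0 ≤ C := by
    apply mul_nonneg
    · apply mul_nonneg (Nat.cast_nonneg _)
      have : 0 ≤ max Ld 0 * B := mul_nonneg (le_max_right Ld 0) hB0
      linarith
    · linarith
  -- the key deterministic estimate
  have keyest : ∀ (n : ℕ) (ω : Ω) (Δ : ℝ), 0 ≤ Δ →
      (∀ (x : X) (s : S), |τhat n ω x s - τ x s| ≤ Δ) →
      (∀ (s : S) (t : ℝ), PX {x | τhat n ω x s = t} = 0) →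
      ∀ g : S → ℝ, InBox g →
      |polValue PX η dstat (thresholdPolicy PX (τhat n ω) g) -
        polValue PX η dstat (thresholdPolicy PX τ g)| ≤ C * Δ := by
    intro n ω Δ hΔ hsup hatml g hg
    have hπ1 : IsPolicy (thresholdPolicy PX (τhat n ω) g) :=
      thresholdPolicy_isPolicy PX _ (hτhatmeas n ω) g
    have hπ2 : IsPolicy (thresholdPolicy PX τ g) :=
      thresholdPolicy_isPolicy PX _ hτmeas g
    have hst := hd_stat _ hπ2
    have hdiffs : ∀ s : S,
        PX {x | thresholdPolicy PX (τhat n ω) g x s ≠ thresholdPolicy PX τ g x s} ≤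
          ENNReal.ofReal (4 * Mhigh * Δ) := by
      intro s
      have hm0 : 0 < 1 - g s := by have := (hg s).2; linarith
      have hm1 : 1 - g s < 1 := by have := (hg s).1; linarith
      have hb := policy_diff_measure_le PX (hτmeas s) (hτhatmeas n ω s) hΔ
        (fun x => hsup x s) hm0 hm1 (hdens_ub s) hMh0 (hdens s) (hatml s)
      have heq : {x | thresholdPolicy PX (τhat n ω) g x s ≠ thresholdPolicy PX τ g x s} =
          {x | (if quantileOf PX (fun x' => τhat n ω x' s) (1 - g s) < τhat n ω x s
              then (1:ℝ) else 0) ≠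
            (if quantileOf PX (fun x' => τ x' s) (1 - g s) < τ x s then (1:ℝ) else 0)} := rfl
      rw [heq]
      exact hb
    have hD0 : (0:ℝ) ≤ 4 * Mhigh * Δ := by
      apply mul_nonneg _ hΔ
      linarith
    have hvb := value_diff_bound PX η hη_meas hη_bdd dstat hπ1 hπ2
      hst.1 hst.2.1 Ld (hLip _ _ hπ1 hπ2) hD0 hdiffs
    calc |polValue PX η dstat (thresholdPolicy PX (τhat n ω) g) -
        polValue PX η dstat (thresholdPolicy PX τ g)| ≤
        ((Fintype.card S : ℝ) * (max Ld 0 * B + 2 * B)) * (4 * Mhigh * Δ) := hvb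
      _ = C * Δ := by rw [hCdef]; ring
  -- probabilistic assembly
  intro ε hε
  obtain ⟨M1, N1, h1⟩ := hτhat_rate (ε / 3) (by linarith)
  obtain ⟨M2, N2, h2⟩ := hVhat_rate (ε / 3) (by linarith)
  obtain ⟨M3, N3, h3⟩ := hZ (ε / 3) (by linarith)
  refine ⟨C * max M1 0 + 2 * max M2 0 + max M3 0, max N1 (max N2 N3), fun n hn => ?_⟩
  have hn1 : n ≥ N1 := le_trans (le_max_left _ _) hn
  have hn2 : n ≥ N2 := le_trans (le_trans (le_max_left _ _) (le_max_right _ _)) hn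
  have hn3 : n ≥ N3 := le_trans (le_trans (le_max_right _ _) (le_max_right _ _)) hn
  set nb : ℝ := (n : ℝ) ^ (-β) with hnb
  set ng : ℝ := (n : ℝ) ^ (-γ) with hng
  have hnb0 : 0 ≤ nb := Real.rpow_nonneg (Nat.cast_nonneg n) _
  have hng0 : 0 ≤ ng := Real.rpow_nonneg (Nat.cast_nonneg n) _
  set E1 : Set Ω := {ω | ∃ (x : X) (s : S), M1 * nb < |τhat n ω x s - τ x s|} with hE1
  set E2 : Set Ω := {ω | ∃ g : S → ℝ, InBox g ∧
      M2 * ng < |Vhat n ω g -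
        polValue PX η dstat (thresholdPolicy PX (τhat n ω) g)|} with hE2
  set E3 : Set Ω := {ω | M3 * (nb + ng) < |Z n ω|} with hE3
  set G : Set Ω := {ω | ∀ (s : S) (t : ℝ), PX {x | τhat n ω x s = t} = 0} with hG
  have hGnull : P Gᶜ = 0 := by
    have := hτhat_atomless n
    rw [MeasureTheory.ae_iff] at this
    exact this
  have hsub : {ω | (C * max M1 0 + 2 * max M2 0 + max M3 0) * (nb + ng) <
      |polValue PX η dstat (thresholdPolicy PX (τhat n ω) (ghat n ω)) -
        polValue PX η dstat (thresholdPolicy PX τ gstar)|} ⊆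
      E1 ∪ (E2 ∪ (E3 ∪ Gᶜ)) := by
    intro ω hω
    simp only [Set.mem_setOf_eq] at hω
    by_contra hc
    simp only [Set.mem_union, not_or] at hc
    obtain ⟨hc1, hc2, hc3, hc4⟩ := hc
    rw [hE1, Set.mem_setOf_eq] at hc1
    rw [hE2, Set.mem_setOf_eq] at hc2
    rw [hE3, Set.mem_setOf_eq] at hc3
    rw [Set.notMem_compl_iff, hG, Set.mem_setOf_eq] at hc4
    push_neg at hc1 hc2 hc3
    -- the deterministic bounds
    have hsupΔ : ∀ (x : X) (s : S), |τhat n ω x s - τ x s| ≤ max M1 0 * nb := by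
      intro x s
      exact le_trans (hc1 x s) (mul_le_mul_of_nonneg_right (le_max_left _ _) hnb0)
    have hΔ0 : 0 ≤ max M1 0 * nb := mul_nonneg (le_max_right _ _) hnb0
    have hW : ∀ g : S → ℝ, InBox g →
        |Vhat n ω g - polValue PX η dstat (thresholdPolicy PX (τhat n ω) g)| ≤
          max M2 0 * ng := by
      intro g hg
      exact le_trans (hc2 g hg) (mul_le_mul_of_nonneg_right (le_max_left _ _) hng0)
    have hZb : |Z n ω| ≤ max M3 0 * (nb + ng) :=
      le_trans hc3 (mul_le_mul_of_nonneg_right (le_max_left _ _) (by linarith))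
    have hkey := keyest n ω (max M1 0 * nb) hΔ0 hsupΔ hc4
    set v := polValue PX η dstat (thresholdPolicy PX (τhat n ω) (ghat n ω)) -
        polValue PX η dstat (thresholdPolicy PX τ gstar) with hv
    -- upper bound
    have hub1 := abs_le.mp (hkey (ghat n ω) (hghat_box n ω))
    have hub2 := hmax (ghat n ω) (hghat_box n ω)
    -- lower bound chain
    have hl1 := abs_le.mp (hW (ghat n ω) (hghat_box n ω))
    have hl2 := hghat_max n ω gstar hgstar
    have hl3 := abs_le.mp (hW gstar hgstar)
    have hl4 := abs_le.mp (hkey gstar hgstar)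
    have hl5 : Z n ω ≤ max M3 0 * (nb + ng) := le_trans (le_abs_self _) hZb
    -- auxiliary comparisons
    have hCM1 : C * (max M1 0 * nb) ≤ C * max M1 0 * (nb + ng) := by
      have h := mul_le_mul_of_nonneg_left (show nb ≤ nb + ng by linarith)
        (mul_nonneg hC0 (le_max_right M1 0))
      calc C * (max M1 0 * nb) = (C * max M1 0) * nb := by ring
        _ ≤ (C * max M1 0) * (nb + ng) := h
    have hM2g : max M2 0 * ng ≤ max M2 0 * (nb + ng) :=
      mul_le_mul_of_nonneg_left (show ng ≤ nb + ng by linarith) (le_max_right M2 0)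
    have hn2' : (0:ℝ) ≤ max M2 0 * (nb + ng) :=
      mul_nonneg (le_max_right M2 0) (by linarith)
    have hn3' : (0:ℝ) ≤ max M3 0 * (nb + ng) :=
      mul_nonneg (le_max_right M3 0) (by linarith)
    have hCM1' : (0:ℝ) ≤ C * (max M1 0 * nb) := mul_nonneg hC0 hΔ0
    have hexpand : (C * max M1 0 + 2 * max M2 0 + max M3 0) * (nb + ng) =
        C * max M1 0 * (nb + ng) + 2 * (max M2 0 * (nb + ng)) +
          max M3 0 * (nb + ng) := by ring
    have hvup : v ≤ (C * max M1 0 + 2 * max M2 0 + max M3 0) * (nb + ng) := by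
      rw [hexpand]
      linarith [hub1.2, hub2, hCM1, hn2', hn3']
    have hvlo : -((C * max M1 0 + 2 * max M2 0 + max M3 0) * (nb + ng)) ≤ v := by
      rw [hexpand]
      linarith [hl1.2, hl2, hl3.1, hl4.1, hl5, hCM1, hM2g]
    exact absurd hω (not_lt.mpr (abs_le.mpr ⟨hvlo, hvup⟩))
  calc P {ω | (C * max M1 0 + 2 * max M2 0 + max M3 0) * ((n:ℝ) ^ (-β) + (n:ℝ) ^ (-γ)) <
      |polValue PX η dstat (thresholdPolicy PX (τhat n ω) (ghat n ω)) -
        polValue PX η dstat (thresholdPolicy PX τ gstar)|} ≤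
      P (E1 ∪ (E2 ∪ (E3 ∪ Gᶜ))) := measure_mono hsub
    _ ≤ P E1 + P (E2 ∪ (E3 ∪ Gᶜ)) := measure_union_le _ _
    _ ≤ P E1 + (P E2 + P (E3 ∪ Gᶜ)) := add_le_add_right (measure_union_le _ _) _
    _ ≤ P E1 + (P E2 + (P E3 + P Gᶜ)) :=
        add_le_add_right (add_le_add_right (measure_union_le _ _) _) _
    _ ≤ ENNReal.ofReal (ε/3) + (ENNReal.ofReal (ε/3) + (ENNReal.ofReal (ε/3) + 0)) := by
        refine add_le_add (h1 n hn1) (add_le_add (h2 n hn2) (add_le_add (h3 n hn3) ?_))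
        exact le_of_eq hGnull
    _ = ENNReal.ofReal ε := by
        rw [add_zero, ← ENNReal.ofReal_add (by linarith) (by linarith),
          ← ENNReal.ofReal_add (by linarith) (by linarith)]
        congr 1
        ring
end

section
/- In the off-policy setting, let ê_0, ê_1 : 𝒳 → ℝ be measurable functions with ê_w(x) ≥ Γ₁ for some Γ₁ > 0 and all x, w, and let η̂ : {0,1} × 𝒳 → ℝ be bounded measurable. Define the plug-in doubly robust score ψ̂_π := η̂_π(X) + (π_W(X)/ê_W(X))·(Y − η̂(W,X)), where η̂_π(x) := π(x)·η̂(1,x) + (1−π(x))·η̂(0,x). Then for every measurable target policy π : 𝒳 → [0,1]: (i) E[ψ_π − ψ̂_π] = E[ (π_W(X)/e_W(X)) · (1 − e_W(X)/ê_W(X)) · (η(W,X) − η̂(W,X)) ]; and (ii) |E[ψ_π − ψ̂_π]| ≤ (1/Γ₁) · Σ_{w∈{0,1}} ‖e_w − ê_w‖_{L²(P_X)} · ‖η(w,·) − η̂(w,·)‖_{L²(P_X)}. -/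
open MeasureTheory
open scoped ENNReal NNReal
private lemma abs_mul_le' {a b c d : ℝ} (h1 : |a| ≤ c) (h2 : |b| ≤ d) : |a * b| ≤ c * d := by
  rw [abs_mul]; exact mul_le_mul h1 h2 (abs_nonneg _) (le_trans (abs_nonneg a) h1)

private lemma abs_add_le' {a b c d : ℝ} (h1 : |a| ≤ c) (h2 : |b| ≤ d) : |a + b| ≤ c + d :=
  (abs_add_le _ _).trans (add_le_add h1 h2)

private lemma abs_sub_le'' {a b c d : ℝ} (h1 : |a| ≤ c) (h2 : |b| ≤ d) : |a - b| ≤ c + d := by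
  rw [sub_eq_add_neg]
  exact (abs_add_le _ _).trans (by rw [abs_neg]; exact add_le_add h1 h2)

private lemma habs_div {a b c : ℝ} (ha : |a| ≤ 1) (hc : 0 < c) (hb : c ≤ b) : |a / b| ≤ 1 / c := by
  rw [abs_div]
  exact div_le_div₀ zero_le_one ha hc (hb.trans (le_abs_self b))

private lemma holder2 {𝒳 : Type*} [MeasurableSpace 𝒳] (μ : Measure 𝒳) (f g : 𝒳 → ℝ)
    (hf : Measurable f) (hg : Measurable g) :
    ∫⁻ x, ENNReal.ofReal (|f x| * |g x|) ∂μ ≤ eLpNorm f 2 μ * eLpNorm g 2 μ := by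
  have h2 : Real.HolderConjugate 2 2 := Real.HolderConjugate.two_two
  have key := ENNReal.lintegral_mul_le_Lp_mul_Lq μ h2
    (f := fun x => ‖f x‖ₑ) (g := fun x => ‖g x‖ₑ)
    hf.enorm.aemeasurable hg.enorm.aemeasurable
  have hpt : ∀ x, ENNReal.ofReal (|f x| * |g x|) = ‖f x‖ₑ * ‖g x‖ₑ := by
    intro x
    rw [ENNReal.ofReal_mul (abs_nonneg _), Real.enorm_eq_ofReal_abs, Real.enorm_eq_ofReal_abs]
  simp only [hpt]
  rw [eLpNorm_eq_lintegral_rpow_enorm_toReal two_ne_zero ENNReal.ofNat_ne_top,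
    eLpNorm_eq_lintegral_rpow_enorm_toReal two_ne_zero ENNReal.ofNat_ne_top]
  simpa using key
/-- The doubly robust score
`ψ_π(ω) = η_π(X) + (π_W(X)/e_W(X)) · (Y − η(W,X))`, where `e : Bool → 𝒳 → ℝ`
collects the two propensities and `η : Bool → 𝒳 → ℝ` the two outcome
regressions. -/
noncomputable def drScore {Ω 𝒳 : Type*} (Xr : Ω → 𝒳) (W : Ω → Bool) (Y : Ω → ℝ)
    (e : Bool → 𝒳 → ℝ) (η : Bool → 𝒳 → ℝ) (π : 𝒳 → ℝ) (ω : Ω) : ℝ :=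
  (π (Xr ω) * η true (Xr ω) + (1 - π (Xr ω)) * η false (Xr ω)) +
    ((if W ω then π (Xr ω) else 1 - π (Xr ω)) / e (W ω) (Xr ω)) *
      (Y ω - η (W ω) (Xr ω))

/-- Bias of the plug-in doubly robust score: the cross-term
representation (i) and the product-rate bound (ii). -/
theorem dr_score_plugin_bias
    {Ω : Type*} [MeasurableSpace Ω] (P : Measure Ω) [IsProbabilityMeasure P]
    {𝒳 : Type*} [MeasurableSpace 𝒳] (PX : Measure 𝒳) [IsProbabilityMeasure PX]
    (Xr : Ω → 𝒳) (hXr : Measurable Xr) (hlaw : P.map Xr = PX)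
    (W : Ω → Bool) (hW : Measurable W)
    (Y : Ω → ℝ) (hY : Integrable Y P)
    (ν : ℝ) (hν : ν ∈ Set.Ioc (0:ℝ) (1/2))
    (e : 𝒳 → ℝ) (he_meas : Measurable e)
    (he_bdd : ∀ x, e x ∈ Set.Icc ν (1 - ν))
    -- `P(W = 1 | X) = e(X)` a.s., stated in integral form
    (hprop : ∀ h : 𝒳 → ℝ, Measurable h → (∃ C, ∀ x, |h x| ≤ C) →
      ∫ ω, (if W ω then (1:ℝ) else 0) * h (Xr ω) ∂P =
        ∫ ω, e (Xr ω) * h (Xr ω) ∂P)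
    (η : Bool → 𝒳 → ℝ) (hη_meas : ∀ w, Measurable (η w))
    (Bη : ℝ) (hη_bdd : ∀ w x, |η w x| ≤ Bη)
    -- `E[Y | W, X] = η(W,X)` a.s., stated in integral form
    (hreg : ∀ h : Bool → 𝒳 → ℝ, (∀ w, Measurable (h w)) →
      (∃ C, ∀ w x, |h w x| ≤ C) →
      ∫ ω, Y ω * h (W ω) (Xr ω) ∂P =
        ∫ ω, η (W ω) (Xr ω) * h (W ω) (Xr ω) ∂P)
    -- estimated nuisances
    (ehat : Bool → 𝒳 → ℝ) (hehat_meas : ∀ w, Measurable (ehat w))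
    (Γ₁ : ℝ) (hΓ₁ : 0 < Γ₁) (hehat_lb : ∀ w x, Γ₁ ≤ ehat w x)
    (ηhat : Bool → 𝒳 → ℝ) (hηhat_meas : ∀ w, Measurable (ηhat w))
    (Bηhat : ℝ) (hηhat_bdd : ∀ w x, |ηhat w x| ≤ Bηhat)
    -- target policy
    (π : 𝒳 → ℝ) (hπ_meas : Measurable π)
    (hπ_bdd : ∀ x, π x ∈ Set.Icc (0:ℝ) 1) :
    (∫ ω, (drScore Xr W Y (fun w x => if w then e x else 1 - e x) η π ω -
          drScore Xr W Y ehat ηhat π ω) ∂P =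
      ∫ ω, ((if W ω then π (Xr ω) else 1 - π (Xr ω)) /
            (if W ω then e (Xr ω) else 1 - e (Xr ω))) *
          (1 - (if W ω then e (Xr ω) else 1 - e (Xr ω)) / ehat (W ω) (Xr ω)) *
          (η (W ω) (Xr ω) - ηhat (W ω) (Xr ω)) ∂P) ∧
    ENNReal.ofReal
        |∫ ω, (drScore Xr W Y (fun w x => if w then e x else 1 - e x) η π ω -
            drScore Xr W Y ehat ηhat π ω) ∂P| ≤
      ENNReal.ofReal (1 / Γ₁) *
        ∑ w : Bool,
          eLpNorm (fun x => (if w then e x else 1 - e x) - ehat w x) 2 PX *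
            eLpNorm (fun x => η w x - ηhat w x) 2 PX := by
  obtain ⟨hν0, hν12⟩ := hν
  -- positivity facts
  have he1 : ∀ x, 0 < e x := fun x => lt_of_lt_of_le hν0 (he_bdd x).1
  have he0 : ∀ x, 0 < 1 - e x := fun x => by have h := (he_bdd x).2; linarith
  have hEpos : ∀ w x, 0 < ehat w x := fun w x => lt_of_lt_of_le hΓ₁ (hehat_lb w x)
  -- nonemptiness and sign of bounds
  have hΩne : Nonempty Ω := by
    by_contra hne
    have h0 : P Set.univ = 1 := measure_univ
    rw [Set.univ_eq_empty_iff.mpr (not_nonempty_iff.mp hne), measure_empty] at h0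
    exact one_ne_zero h0.symm
  have hXne : Nonempty 𝒳 := ⟨Xr hΩne.some⟩
  have hBη : 0 ≤ Bη := le_trans (abs_nonneg _) (hη_bdd true hXne.some)
  have hBηhat : 0 ≤ Bηhat := le_trans (abs_nonneg _) (hηhat_bdd true hXne.some)
  -- pointwise abs bounds
  have hπa : ∀ x, |π x| ≤ 1 := fun x => abs_le.2 ⟨by linarith [(hπ_bdd x).1], (hπ_bdd x).2⟩
  have hπa' : ∀ x, |1 - π x| ≤ 1 := fun x =>
    abs_le.2 ⟨by linarith [(hπ_bdd x).2], by linarith [(hπ_bdd x).1]⟩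
  have hea : ∀ x, |e x| ≤ 1 := fun x =>
    abs_le.2 ⟨by linarith [(he_bdd x).1], by linarith [(he_bdd x).2]⟩
  have hea' : ∀ x, |1 - e x| ≤ 1 := fun x =>
    abs_le.2 ⟨by linarith [(he_bdd x).2], by linarith [(he_bdd x).1]⟩
  have hpwa : ∀ (w : Bool) x, |if w then π x else 1 - π x| ≤ 1 := by
    intro w x; cases w
    · simpa using hπa' x
    · simpa using hπa x
  have hewa : ∀ (w : Bool) x, |if w then e x else 1 - e x| ≤ 1 := by
    intro w x; cases w
    · simpa using hea' x
    · simpa using hea x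
  have hewlb : ∀ (w : Bool) x, ν ≤ (if w then e x else 1 - e x) := by
    intro w x; cases w
    · simp only [Bool.false_eq_true, if_false]; linarith [(he_bdd x).2]
    · simpa using (he_bdd x).1
  have hΔηb : ∀ w x, |η w x - ηhat w x| ≤ Bη + Bηhat := fun w x =>
    abs_sub_le'' (hη_bdd w x) (hηhat_bdd w x)
  have hpwdive : ∀ (w : Bool) x,
      |(if w then π x else 1 - π x) / (if w then e x else 1 - e x)| ≤ 1 / ν :=
    fun w x => habs_div (hpwa w x) hν0 (hewlb w x)
  have hpwdivE : ∀ (w : Bool) x, |(if w then π x else 1 - π x) / ehat w x| ≤ 1 / Γ₁ :=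
    fun w x => habs_div (hpwa w x) hΓ₁ (hehat_lb w x)
  have hewdivE : ∀ (w : Bool) x, |(if w then e x else 1 - e x) / ehat w x| ≤ 1 / Γ₁ :=
    fun w x => habs_div (hewa w x) hΓ₁ (hehat_lb w x)
  -- measurability of boolean-indexed pieces
  have hpwm : ∀ w : Bool, Measurable fun x => if w then π x else 1 - π x := by
    intro w; cases w
    · simpa using (show Measurable fun x => 1 - π x from measurable_const.sub hπ_meas)
    · simpa using hπ_meas
  have hewm : ∀ w : Bool, Measurable fun x => if w then e x else 1 - e x := by
    intro w; cases w
    · simpa using (show Measurable fun x => 1 - e x from measurable_const.sub he_meas)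
    · simpa using he_meas
  -- general helpers
  have hmeasWX : ∀ (k : Bool → 𝒳 → ℝ), (∀ w, Measurable (k w)) →
      Measurable fun ω => k (W ω) (Xr ω) := by
    intro k hk
    have hk' : (fun ω => k (W ω) (Xr ω)) =
        fun ω => if W ω then k true (Xr ω) else k false (Xr ω) := by
      funext ω; cases W ω <;> simp
    rw [hk']
    exact Measurable.ite (hW (measurableSet_singleton true)) ((hk true).comp hXr)
      ((hk false).comp hXr)
  have hintWX : ∀ (k : Bool → 𝒳 → ℝ), (∀ w, Measurable (k w)) → ∀ C : ℝ,
      (∀ w x, |k w x| ≤ C) → Integrable (fun ω => k (W ω) (Xr ω)) P := by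
    intro k hk C hC
    exact ⟨(hmeasWX k hk).aestronglyMeasurable,
      HasFiniteIntegral.of_bounded (C := C) (ae_of_all _ fun ω => by
        simpa [Real.norm_eq_abs] using hC (W ω) (Xr ω))⟩
  have hintX : ∀ f : 𝒳 → ℝ, Measurable f → ∀ C : ℝ, (∀ x, |f x| ≤ C) →
      Integrable (fun ω => f (Xr ω)) P := by
    intro f hf C hC
    exact ⟨(hf.comp hXr).aestronglyMeasurable,
      HasFiniteIntegral.of_bounded (C := C) (ae_of_all _ fun ω => by
        simpa [Real.norm_eq_abs] using hC (Xr ω))⟩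
  -- propensity extension
  have hAext : ∀ (k : Bool → 𝒳 → ℝ), (∀ w, Measurable (k w)) → ∀ C : ℝ,
      (∀ w x, |k w x| ≤ C) →
      ∫ ω, k (W ω) (Xr ω) ∂P =
        ∫ ω, (e (Xr ω) * k true (Xr ω) + (1 - e (Xr ω)) * k false (Xr ω)) ∂P := by
    intro k hk C hC
    have hd_meas : Measurable fun x => k true x - k false x := (hk true).sub (hk false)
    have hd_bdd : ∀ x, |k true x - k false x| ≤ C + C := fun x =>
      abs_sub_le'' (hC true x) (hC false x)
    have hIndm : Measurable fun ω => (if W ω then (1:ℝ) else 0) := by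
      exact Measurable.ite (hW (measurableSet_singleton true)) measurable_const measurable_const
    have hInd : Integrable
        (fun ω => (if W ω then (1:ℝ) else 0) * (k true (Xr ω) - k false (Xr ω))) P := by
      refine ⟨(hIndm.mul (hd_meas.comp hXr)).aestronglyMeasurable,
        HasFiniteIntegral.of_bounded (C := 1 * (C + C)) (ae_of_all _ fun ω => ?_)⟩
      rw [Real.norm_eq_abs]
      refine abs_mul_le' ?_ (hd_bdd (Xr ω))
      cases W ω <;> simp
    have hI0 : Integrable (fun ω => k false (Xr ω)) P := hintX _ (hk false) C fun x => hC false x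
    have hIe : Integrable (fun ω => e (Xr ω) * (k true (Xr ω) - k false (Xr ω))) P :=
      hintX (fun x => e x * (k true x - k false x)) (he_meas.mul hd_meas) (1 * (C + C))
        fun x => abs_mul_le' (hea x) (hd_bdd x)
    calc ∫ ω, k (W ω) (Xr ω) ∂P
        = ∫ ω, ((if W ω then (1:ℝ) else 0) * (k true (Xr ω) - k false (Xr ω)) +
            k false (Xr ω)) ∂P := by
          refine integral_congr_ae (ae_of_all _ fun ω => ?_)
          cases hw : W ω <;> simp [hw]
      _ = (∫ ω, (if W ω then (1:ℝ) else 0) * (k true (Xr ω) - k false (Xr ω)) ∂P) +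
            ∫ ω, k false (Xr ω) ∂P := integral_add hInd hI0
      _ = (∫ ω, e (Xr ω) * (k true (Xr ω) - k false (Xr ω)) ∂P) +
            ∫ ω, k false (Xr ω) ∂P := by
          rw [hprop _ hd_meas ⟨C + C, hd_bdd⟩]
      _ = ∫ ω, (e (Xr ω) * k true (Xr ω) + (1 - e (Xr ω)) * k false (Xr ω)) ∂P := by
          rw [← integral_add hIe hI0]
          exact integral_congr_ae (ae_of_all _ fun ω => by ring)
  -- named auxiliary functions
  obtain ⟨A, hA_def⟩ : ∃ A : 𝒳 → ℝ, A = fun x =>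
      π x * (η true x - ηhat true x) + (1 - π x) * (η false x - ηhat false x) := ⟨_, rfl⟩
  obtain ⟨h, hh_def⟩ : ∃ h : Bool → 𝒳 → ℝ, h = fun w x =>
      (if w then π x else 1 - π x) / (if w then e x else 1 - e x) -
        (if w then π x else 1 - π x) / ehat w x := ⟨_, rfl⟩
  obtain ⟨g, hg_def⟩ : ∃ g : Bool → 𝒳 → ℝ, g = fun w x =>
      -((if w then π x else 1 - π x) / (if w then e x else 1 - e x)) * η w x +
        ((if w then π x else 1 - π x) / ehat w x) * ηhat w x := ⟨_, rfl⟩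
  obtain ⟨g2, hg2_def⟩ : ∃ g2 : Bool → 𝒳 → ℝ, g2 = fun w x =>
      (if w then π x else 1 - π x) / ehat w x * (η w x - ηhat w x) := ⟨_, rfl⟩
  obtain ⟨g3, hg3_def⟩ : ∃ g3 : Bool → 𝒳 → ℝ, g3 = fun w x =>
      (if w then π x else 1 - π x) / (if w then e x else 1 - e x) *
        (1 - (if w then e x else 1 - e x) / ehat w x) * (η w x - ηhat w x) := ⟨_, rfl⟩
  obtain ⟨F, hF_def⟩ : ∃ F : 𝒳 → ℝ, F = fun x =>
      A x - (e x * g2 true x + (1 - e x) * g2 false x) := ⟨_, rfl⟩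
  -- measurability of the pieces
  have hAm : Measurable A := by
    rw [hA_def]
    exact (hπ_meas.mul ((hη_meas true).sub (hηhat_meas true))).add
      ((measurable_const.sub hπ_meas).mul ((hη_meas false).sub (hηhat_meas false)))
  have hhm : ∀ w, Measurable (h w) := by
    intro w; rw [hh_def]
    exact ((hpwm w).div (hewm w)).sub ((hpwm w).div (hehat_meas w))
  have hgm : ∀ w, Measurable (g w) := by
    intro w; rw [hg_def]
    exact ((((hpwm w).div (hewm w)).neg).mul (hη_meas w)).add
      (((hpwm w).div (hehat_meas w)).mul (hηhat_meas w))
  have hg2m : ∀ w, Measurable (g2 w) := by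
    intro w; rw [hg2_def]
    exact ((hpwm w).div (hehat_meas w)).mul ((hη_meas w).sub (hηhat_meas w))
  have hg3m : ∀ w, Measurable (g3 w) := by
    intro w; rw [hg3_def]
    exact (((hpwm w).div (hewm w)).mul
      (measurable_const.sub ((hewm w).div (hehat_meas w)))).mul
      ((hη_meas w).sub (hηhat_meas w))
  have hFm : Measurable F := by
    rw [hF_def]
    exact hAm.sub ((he_meas.mul (hg2m true)).add
      ((measurable_const.sub he_meas).mul (hg2m false)))
  -- bounds of the pieces
  have hAb : ∀ x, |A x| ≤ 1 * (Bη + Bηhat) + 1 * (Bη + Bηhat) := by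
    intro x; rw [hA_def]
    exact abs_add_le' (abs_mul_le' (hπa x) (hΔηb true x))
      (abs_mul_le' (hπa' x) (hΔηb false x))
  have hhb : ∀ w x, |h w x| ≤ 1 / ν + 1 / Γ₁ := by
    intro w x; rw [hh_def]
    exact abs_sub_le'' (hpwdive w x) (hpwdivE w x)
  have hgb : ∀ w x, |g w x| ≤ 1 / ν * Bη + 1 / Γ₁ * Bηhat := by
    intro w x; rw [hg_def]
    refine abs_add_le' (abs_mul_le' ?_ (hη_bdd w x)) (abs_mul_le' (hpwdivE w x) (hηhat_bdd w x))
    rw [abs_neg]; exact hpwdive w x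
  have hg2b : ∀ w x, |g2 w x| ≤ 1 / Γ₁ * (Bη + Bηhat) := by
    intro w x; rw [hg2_def]
    exact abs_mul_le' (hpwdivE w x) (hΔηb w x)
  have hg3b : ∀ w x, |g3 w x| ≤ 1 / ν * (1 + 1 / Γ₁) * (Bη + Bηhat) := by
    intro w x; rw [hg3_def]
    exact abs_mul_le' (abs_mul_le' (hpwdive w x)
      (abs_sub_le'' abs_one.le (hewdivE w x))) (hΔηb w x)
  have hFb : ∀ x, |F x| ≤ (1 * (Bη + Bηhat) + 1 * (Bη + Bηhat)) +
      (1 * (1 / Γ₁ * (Bη + Bηhat)) + 1 * (1 / Γ₁ * (Bη + Bηhat))) := by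
    intro x; rw [hF_def]
    exact abs_sub_le'' (hAb x) (abs_add_le' (abs_mul_le' (hea x) (hg2b true x))
      (abs_mul_le' (hea' x) (hg2b false x)))
  -- integrabilities
  have hIA : Integrable (fun ω => A (Xr ω)) P := hintX A hAm _ hAb
  have hIYh : Integrable (fun ω => Y ω * h (W ω) (Xr ω)) P := by
    have hb : Integrable (fun ω => h (W ω) (Xr ω) * Y ω) P :=
      hY.bdd_mul (hmeasWX h hhm).aestronglyMeasurable
        (c := 1 / ν + 1 / Γ₁) (ae_of_all _ fun ω => by simpa [Real.norm_eq_abs] using hhb (W ω) (Xr ω))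
    exact hb.congr (ae_of_all _ fun ω => mul_comm _ _)
  have hIg : Integrable (fun ω => g (W ω) (Xr ω)) P := hintWX g hgm _ hgb
  have hIηh : Integrable (fun ω => η (W ω) (Xr ω) * h (W ω) (Xr ω)) P :=
    hintWX (fun w x => η w x * h w x) (fun w => (hη_meas w).mul (hhm w))
      (Bη * (1 / ν + 1 / Γ₁)) (fun w x => abs_mul_le' (hη_bdd w x) (hhb w x))
  have hIg2 : Integrable (fun ω => g2 (W ω) (Xr ω)) P := hintWX g2 hg2m _ hg2b
  have hIeg2 : Integrable (fun ω => e (Xr ω) * g2 true (Xr ω) +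
      (1 - e (Xr ω)) * g2 false (Xr ω)) P :=
    hintX (fun x => e x * g2 true x + (1 - e x) * g2 false x)
      ((he_meas.mul (hg2m true)).add ((measurable_const.sub he_meas).mul (hg2m false)))
      (1 * (1 / Γ₁ * (Bη + Bηhat)) + 1 * (1 / Γ₁ * (Bη + Bηhat)))
      (fun x => abs_add_le' (abs_mul_le' (hea x) (hg2b true x))
        (abs_mul_le' (hea' x) (hg2b false x)))
  -- pointwise decomposition of the score difference
  have hD : ∀ ω, drScore Xr W Y (fun w x => if w then e x else 1 - e x) η π ω -
      drScore Xr W Y ehat ηhat π ω =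
      A (Xr ω) + Y ω * h (W ω) (Xr ω) + g (W ω) (Xr ω) := by
    intro ω
    rw [hA_def, hh_def, hg_def]
    simp only [drScore]
    cases hw : W ω <;> simp [hw] <;> ring
  -- the main identity : E[diff] = E[A(X)] - E[g2(W,X)]
  have hmain : ∫ ω, (drScore Xr W Y (fun w x => if w then e x else 1 - e x) η π ω -
      drScore Xr W Y ehat ηhat π ω) ∂P =
      (∫ ω, A (Xr ω) ∂P) - ∫ ω, g2 (W ω) (Xr ω) ∂P := by
    have step1 : ∫ ω, (drScore Xr W Y (fun w x => if w then e x else 1 - e x) η π ω -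
        drScore Xr W Y ehat ηhat π ω) ∂P =
        (∫ ω, A (Xr ω) ∂P) + (∫ ω, Y ω * h (W ω) (Xr ω) ∂P) +
          ∫ ω, g (W ω) (Xr ω) ∂P := by
      have i1 : Integrable (fun ω => A (Xr ω) + Y ω * h (W ω) (Xr ω)) P := hIA.add hIYh
      calc ∫ ω, (drScore Xr W Y (fun w x => if w then e x else 1 - e x) η π ω -
            drScore Xr W Y ehat ηhat π ω) ∂P
          = ∫ ω, (A (Xr ω) + Y ω * h (W ω) (Xr ω)) + g (W ω) (Xr ω) ∂P :=
            integral_congr_ae (ae_of_all _ hD)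
        _ = (∫ ω, A (Xr ω) + Y ω * h (W ω) (Xr ω) ∂P) + ∫ ω, g (W ω) (Xr ω) ∂P :=
            integral_add i1 hIg
        _ = (∫ ω, A (Xr ω) ∂P) + (∫ ω, Y ω * h (W ω) (Xr ω) ∂P) +
            ∫ ω, g (W ω) (Xr ω) ∂P := by rw [integral_add hIA hIYh]
    have step2 : ∫ ω, Y ω * h (W ω) (Xr ω) ∂P =
        ∫ ω, η (W ω) (Xr ω) * h (W ω) (Xr ω) ∂P :=
      hreg h hhm ⟨1 / ν + 1 / Γ₁, hhb⟩
    have step3 : (∫ ω, η (W ω) (Xr ω) * h (W ω) (Xr ω) ∂P) +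
        (∫ ω, g (W ω) (Xr ω) ∂P) = - ∫ ω, g2 (W ω) (Xr ω) ∂P := by
      rw [← integral_add hIηh hIg, ← integral_neg]
      refine integral_congr_ae (ae_of_all _ fun ω => ?_)
      rw [hh_def, hg_def, hg2_def]; ring
    rw [step1, step2, add_assoc, step3, ← sub_eq_add_neg]
  -- identify E[diff] with ∫ F(X)
  have hmain2 : ∫ ω, (drScore Xr W Y (fun w x => if w then e x else 1 - e x) η π ω -
      drScore Xr W Y ehat ηhat π ω) ∂P = ∫ ω, F (Xr ω) ∂P := by
    rw [hmain, hAext g2 hg2m _ hg2b, ← integral_sub hIA hIeg2]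
    exact integral_congr_ae (ae_of_all _ fun ω => by rw [hF_def])
  constructor
  · -- part (i)
    have hRHSi : ∫ ω, ((if W ω then π (Xr ω) else 1 - π (Xr ω)) /
          (if W ω then e (Xr ω) else 1 - e (Xr ω))) *
        (1 - (if W ω then e (Xr ω) else 1 - e (Xr ω)) / ehat (W ω) (Xr ω)) *
        (η (W ω) (Xr ω) - ηhat (W ω) (Xr ω)) ∂P = ∫ ω, g3 (W ω) (Xr ω) ∂P := by
      refine integral_congr_ae (ae_of_all _ fun ω => ?_)
      rw [hg3_def]
    have hptF : ∀ x, e x * g3 true x + (1 - e x) * g3 false x = F x := by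
      intro x
      rw [hg3_def, hF_def, hg2_def, hA_def]
      simp only [if_true, if_false, Bool.false_eq_true]
      have h1 : e x ≠ 0 := ne_of_gt (he1 x)
      have h2 : (1:ℝ) - e x ≠ 0 := ne_of_gt (he0 x)
      have h3 : ehat true x ≠ 0 := ne_of_gt (hEpos true x)
      have h4 : ehat false x ≠ 0 := ne_of_gt (hEpos false x)
      field_simp
      ring
    rw [hmain2, hRHSi, hAext g3 hg3m _ hg3b]
    exact integral_congr_ae (ae_of_all _ fun ω => (hptF (Xr ω)).symm)
  · -- part (ii)
    have hDF : ∫ ω, (drScore Xr W Y (fun w x => if w then e x else 1 - e x) η π ω -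
        drScore Xr W Y ehat ηhat π ω) ∂P = ∫ x, F x ∂PX := by
      rw [hmain2, ← hlaw, integral_map hXr.aemeasurable hFm.aestronglyMeasurable]
    rw [hDF]
    -- factored form of F
    have hFfac : ∀ x, F x = (π x / ehat true x) * (ehat true x - e x) *
        (η true x - ηhat true x) + ((1 - π x) / ehat false x) *
        (ehat false x - (1 - e x)) * (η false x - ηhat false x) := by
      intro x
      rw [hF_def, hA_def, hg2_def]
      simp only [if_true, if_false, Bool.false_eq_true]
      have h3 : ehat true x ≠ 0 := ne_of_gt (hEpos true x)
      have h4 : ehat false x ≠ 0 := ne_of_gt (hEpos false x)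
      field_simp
      ring
    -- pointwise bound on |F|
    have hFB : ∀ x, |F x| ≤ (1 / Γ₁) *
        (|e x - ehat true x| * |η true x - ηhat true x| +
          |(1 - e x) - ehat false x| * |η false x - ηhat false x|) := by
      intro x
      rw [hFfac x]
      have t1 : |(π x / ehat true x) * (ehat true x - e x) * (η true x - ηhat true x)| ≤
          1 / Γ₁ * |e x - ehat true x| * |η true x - ηhat true x| := by
        rw [abs_mul, abs_mul, abs_sub_comm (ehat true x)]
        exact mul_le_mul_of_nonneg_right (mul_le_mul_of_nonneg_right
          (habs_div (hπa x) hΓ₁ (hehat_lb true x)) (abs_nonneg _)) (abs_nonneg _)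
      have t2 : |((1 - π x) / ehat false x) * (ehat false x - (1 - e x)) *
          (η false x - ηhat false x)| ≤
          1 / Γ₁ * |(1 - e x) - ehat false x| * |η false x - ηhat false x| := by
        rw [abs_mul, abs_mul, abs_sub_comm (ehat false x)]
        exact mul_le_mul_of_nonneg_right (mul_le_mul_of_nonneg_right
          (habs_div (hπa' x) hΓ₁ (hehat_lb false x)) (abs_nonneg _)) (abs_nonneg _)
      exact (abs_add_le _ _).trans ((add_le_add t1 t2).trans_eq (by ring))
    -- integrability of F on PX
    have hFint : Integrable F PX :=
      ⟨hFm.aestronglyMeasurable, HasFiniteIntegral.of_bounded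
        (C := (1 * (Bη + Bηhat) + 1 * (Bη + Bηhat)) +
          (1 * (1 / Γ₁ * (Bη + Bηhat)) + 1 * (1 / Γ₁ * (Bη + Bηhat))))
        (ae_of_all _ fun x => by simpa [Real.norm_eq_abs] using hFb x)⟩
    have hm1 : Measurable fun x =>
        ENNReal.ofReal (|e x - ehat true x| * |η true x - ηhat true x|) :=
      (((he_meas.sub (hehat_meas true)).abs).mul
        (((hη_meas true).sub (hηhat_meas true)).abs)).ennreal_ofReal
    calc ENNReal.ofReal |∫ x, F x ∂PX|
        ≤ ENNReal.ofReal (∫ x, |F x| ∂PX) := ENNReal.ofReal_le_ofReal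
          (by simpa [Real.norm_eq_abs] using norm_integral_le_integral_norm (f := F) (μ := PX))
      _ = ∫⁻ x, ENNReal.ofReal |F x| ∂PX :=
          ofReal_integral_eq_lintegral_ofReal hFint.abs (ae_of_all _ fun x => abs_nonneg _)
      _ ≤ ∫⁻ x, ENNReal.ofReal ((1 / Γ₁) *
            (|e x - ehat true x| * |η true x - ηhat true x| +
              |(1 - e x) - ehat false x| * |η false x - ηhat false x|)) ∂PX :=
          lintegral_mono fun x => ENNReal.ofReal_le_ofReal (hFB x)
      _ = ENNReal.ofReal (1 / Γ₁) * ∫⁻ x,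
            (ENNReal.ofReal (|e x - ehat true x| * |η true x - ηhat true x|) +
              ENNReal.ofReal (|(1 - e x) - ehat false x| * |η false x - ηhat false x|)) ∂PX := by
          rw [← lintegral_const_mul' _ _ ENNReal.ofReal_ne_top]
          refine lintegral_congr fun x => ?_
          rw [ENNReal.ofReal_mul (by positivity),
            ENNReal.ofReal_add (by positivity) (by positivity)]
      _ = ENNReal.ofReal (1 / Γ₁) *
            ((∫⁻ x, ENNReal.ofReal (|e x - ehat true x| * |η true x - ηhat true x|) ∂PX) +
              ∫⁻ x, ENNReal.ofReal
                (|(1 - e x) - ehat false x| * |η false x - ηhat false x|) ∂PX) := by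
          rw [lintegral_add_left hm1]
      _ ≤ ENNReal.ofReal (1 / Γ₁) *
          ∑ w : Bool,
            eLpNorm (fun x => (if w then e x else 1 - e x) - ehat w x) 2 PX *
              eLpNorm (fun x => η w x - ηhat w x) 2 PX := by
          rw [Fintype.sum_bool]
          simp only [if_true, if_false]
          refine mul_le_mul_right (add_le_add ?_ ?_) _
          · exact holder2 PX _ _ (he_meas.sub (hehat_meas true))
              ((hη_meas true).sub (hηhat_meas true))
          · exact holder2 PX _ _ ((measurable_const.sub he_meas).sub (hehat_meas false))
              ((hη_meas false).sub (hηhat_meas false))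
end

section
/- Consider the embedded Markov chain of the M_n/M/1 queue with capacity k̄ ≥ 2. Define r_0 := 1; r_1 := (λ_1 + μ)·π̄_0/μ; r_k := ((λ_k + μ)·π̄_0/μ)·Π_{m=1}^{k−1}(λ_m·π̄_m/μ) for 2 ≤ k ≤ k̄−1; and r_{k̄} := π̄_0·Π_{m=1}^{k̄−1}(λ_m·π̄_m/μ). Let R := Σ_{m=0}^{k̄} r_m and define d(a,k) := (r_k/R)·f(a|k) for a ∈ {0,1} and 0 ≤ k ≤ k̄. Then d is a probability distribution on {0,1} × {0,…,k̄} (i.e., Σ_{a,k} d(a,k) = 1) and d is stationary for the transition matrix P, i.e., Σ_{(a,k)} d(a,k)·P((a,k),(a',k')) = d(a',k') for every (a',k'). -/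
/-- Next-event-type probabilities of the embedded `M_n/M/1` chain:
`f(1|k) = λ_k 1{k<k̄} / (λ_k 1{k<k̄} + μ 1{k>0})` and
`f(0|k) = μ 1{k>0} / (λ_k 1{k<k̄} + μ 1{k>0})`. -/
noncomputable def nextType (kbar : ℕ) (lam : ℕ → ℝ) (mu : ℝ)
    (a : Bool) (k : ℕ) : ℝ :=
  (if a then lam k * (if k < kbar then 1 else 0)
    else mu * (if 0 < k then 1 else 0)) /
    (lam k * (if k < kbar then 1 else 0) + mu * (if 0 < k then 1 else 0))

/-- Transition matrix of the embedded `M_n/M/1` chain on `{0,1} × {0,…,k̄}`. -/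
noncomputable def queueTrans (kbar : ℕ) (lam : ℕ → ℝ) (mu : ℝ)
    (pibar : ℕ → ℝ) (z z' : Bool × Fin (kbar + 1)) : ℝ :=
  if z.1 then
    if (z.2 : ℕ) < kbar then
      (if (z'.2 : ℕ) = (z.2 : ℕ) + 1 then
          pibar (z.2 : ℕ) * nextType kbar lam mu z'.1 ((z.2 : ℕ) + 1) else 0) +
      (if z'.2 = z.2 then
          (1 - pibar (z.2 : ℕ)) * nextType kbar lam mu z'.1 (z.2 : ℕ) else 0)
    else
      if z'.2 = z.2 then nextType kbar lam mu z'.1 (z.2 : ℕ) else 0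
  else
    if 0 < (z.2 : ℕ) then
      if (z'.2 : ℕ) = (z.2 : ℕ) - 1 then
        nextType kbar lam mu z'.1 ((z.2 : ℕ) - 1) else 0
    else
      if z'.2 = z.2 then nextType kbar lam mu z'.1 (z.2 : ℕ) else 0

/-- The unnormalized stationary weights `r_0, …, r_{k̄}` of the queue-length
component. -/
noncomputable def statWeight (kbar : ℕ) (lam : ℕ → ℝ) (mu : ℝ)
    (pibar : ℕ → ℝ) (k : ℕ) : ℝ :=
  if k = 0 then 1
  else if k = kbar then
    pibar 0 * ∏ m ∈ Finset.Ico 1 kbar, (lam m * pibar m / mu)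
  else ((lam k + mu) * pibar 0 / mu) * ∏ m ∈ Finset.Ico 1 k, (lam m * pibar m / mu)

noncomputable def cw (lam : ℕ → ℝ) (mu : ℝ) (pibar : ℕ → ℝ) (k : ℕ) : ℝ :=
  pibar 0 * ∏ m ∈ Finset.Ico 1 k, (lam m * pibar m / mu)

lemma den_pos {kbar : ℕ} (hk : 2 ≤ kbar) {lam : ℕ → ℝ} (hlam : ∀ k < kbar, 0 < lam k)
    {mu : ℝ} (hmu : 0 < mu) {k : ℕ} (hkk : k ≤ kbar) :
    0 < lam k * (if k < kbar then 1 else 0) + mu * (if 0 < k then 1 else 0) := by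
  rcases lt_or_eq_of_le hkk with h | h
  · have h1 : 0 < lam k := hlam k h
    rcases Nat.eq_zero_or_pos k with h0 | h0
    · subst h0
      have h2 : (0:ℕ) < kbar := h
      simpa [h, h2] using h1
    · simp [h, h0]; positivity
  · subst h
    have h0 : 0 < k := by omega
    simp [lt_irrefl, h0, hmu]

lemma nextType_add {kbar : ℕ} (hk : 2 ≤ kbar) {lam : ℕ → ℝ} (hlam : ∀ k < kbar, 0 < lam k)
    {mu : ℝ} (hmu : 0 < mu) {k : ℕ} (hkk : k ≤ kbar) :
    nextType kbar lam mu true k + nextType kbar lam mu false k = 1 := by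
  have hd := den_pos hk hlam hmu hkk
  simp only [nextType, if_true, if_false, Bool.false_eq_true]
  rw [← add_div, div_self (ne_of_gt hd)]

lemma prod_nonneg' {kbar : ℕ} {lam : ℕ → ℝ} (hlam : ∀ k < kbar, 0 < lam k)
    {mu : ℝ} (hmu : 0 < mu) {pibar : ℕ → ℝ} (hpibar : ∀ k < kbar, pibar k ∈ Set.Icc (0:ℝ) 1)
    {k : ℕ} (hkk : k ≤ kbar) :
    0 ≤ ∏ m ∈ Finset.Ico 1 k, (lam m * pibar m / mu) := by
  apply Finset.prod_nonneg
  intro m hm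
  simp only [Finset.mem_Ico] at hm
  have hmk : m < kbar := lt_of_lt_of_le hm.2 hkk
  have h1 : 0 < lam m := hlam m hmk
  have h2 : 0 ≤ pibar m := (hpibar m hmk).1
  positivity

lemma statWeight_nonneg {kbar : ℕ} (hk : 2 ≤ kbar) {lam : ℕ → ℝ} (hlam : ∀ k < kbar, 0 < lam k)
    {mu : ℝ} (hmu : 0 < mu) {pibar : ℕ → ℝ} (hpibar : ∀ k < kbar, pibar k ∈ Set.Icc (0:ℝ) 1)
    {k : ℕ} (hkk : k ≤ kbar) :
    0 ≤ statWeight kbar lam mu pibar k := by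
  have hp0 := (hpibar 0 (by omega)).1
  unfold statWeight
  split
  · norm_num
  · split
    · exact mul_nonneg hp0 (prod_nonneg' hlam hmu hpibar le_rfl)
    · rename_i h1 h2
      have hklt : k < kbar := lt_of_le_of_ne hkk h2
      have hl := hlam k hklt
      have hp := prod_nonneg' hlam hmu hpibar hkk
      have h3 : 0 ≤ (lam k + mu) * pibar 0 / mu := by positivity
      positivity

lemma sumR_pos {kbar : ℕ} (hk : 2 ≤ kbar) {lam : ℕ → ℝ} (hlam : ∀ k < kbar, 0 < lam k)
    {mu : ℝ} (hmu : 0 < mu) {pibar : ℕ → ℝ} (hpibar : ∀ k < kbar, pibar k ∈ Set.Icc (0:ℝ) 1) :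
    0 < ∑ m ∈ Finset.range (kbar + 1), statWeight kbar lam mu pibar m := by
  have h1 : statWeight kbar lam mu pibar 0 = 1 := by simp [statWeight]
  have h2 : (1:ℝ) ≤ ∑ m ∈ Finset.range (kbar + 1), statWeight kbar lam mu pibar m := by
    rw [← h1]
    apply Finset.single_le_sum (f := fun m => statWeight kbar lam mu pibar m)
    · intro i hi
      exact statWeight_nonneg hk hlam hmu hpibar
        (by simpa [Nat.lt_succ_iff] using Finset.mem_range.mp hi)
    · simp
  linarith

lemma nextType_zero_false {kbar : ℕ} {lam : ℕ → ℝ} {mu : ℝ} :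
    nextType kbar lam mu false 0 = 0 := by simp [nextType]

lemma nextType_zero_true {kbar : ℕ} (hk : 2 ≤ kbar) {lam : ℕ → ℝ}
    (hlam : ∀ k < kbar, 0 < lam k) {mu : ℝ} :
    nextType kbar lam mu true 0 = 1 := by
  have h0 : 0 < kbar := by omega
  have h1 : lam 0 ≠ 0 := ne_of_gt (hlam 0 h0)
  simp [nextType, h0, h1]

lemma nextType_top_true {kbar : ℕ} {lam : ℕ → ℝ} {mu : ℝ} :
    nextType kbar lam mu true kbar = 0 := by simp [nextType]

lemma nextType_top_false {kbar : ℕ} (hk : 2 ≤ kbar) {lam : ℕ → ℝ} {mu : ℝ} (hmu : 0 < mu) :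
    nextType kbar lam mu false kbar = 1 := by
  have h0 : 0 < kbar := by omega
  simp [nextType, h0, ne_of_gt hmu]

lemma nextType_mid_true {kbar : ℕ} {lam : ℕ → ℝ} {mu : ℝ} {k : ℕ} (h1 : 1 ≤ k) (h2 : k < kbar) :
    nextType kbar lam mu true k = lam k / (lam k + mu) := by
  simp [nextType, h1, h2, Nat.lt_of_lt_of_le Nat.zero_lt_one h1]

lemma nextType_mid_false {kbar : ℕ} {lam : ℕ → ℝ} {mu : ℝ} {k : ℕ} (h1 : 1 ≤ k) (h2 : k < kbar) :
    nextType kbar lam mu false k = mu / (lam k + mu) := by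
  simp [nextType, h1, h2, Nat.lt_of_lt_of_le Nat.zero_lt_one h1]

lemma statWeight_mid {kbar : ℕ} {lam : ℕ → ℝ} {mu : ℝ} {pibar : ℕ → ℝ} {k : ℕ}
    (h1 : 1 ≤ k) (h2 : k < kbar) :
    statWeight kbar lam mu pibar k = (lam k + mu) / mu * cw lam mu pibar k := by
  have h0 : k ≠ 0 := by omega
  have h3 : k ≠ kbar := by omega
  simp only [statWeight, cw, h0, h3, if_false]
  ring

lemma statWeight_top {kbar : ℕ} (hk : 2 ≤ kbar) {lam : ℕ → ℝ} {mu : ℝ} {pibar : ℕ → ℝ} :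
    statWeight kbar lam mu pibar kbar = cw lam mu pibar kbar := by
  have h0 : kbar ≠ 0 := by omega
  simp [statWeight, cw, h0]

lemma cw_succ {lam : ℕ → ℝ} {mu : ℝ} {pibar : ℕ → ℝ} {k : ℕ} (h1 : 1 ≤ k) :
    cw lam mu pibar (k + 1) = cw lam mu pibar k * (lam k * pibar k / mu) := by
  simp only [cw, Finset.prod_Ico_succ_top h1]
  ring

lemma cw_one {lam : ℕ → ℝ} {mu : ℝ} {pibar : ℕ → ℝ} :
    cw lam mu pibar 1 = pibar 0 := by simp [cw]

-- E1 : r_k f(0|k) = c_k for 1 ≤ k ≤ kbar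
lemma rt_eq {kbar : ℕ} (hk : 2 ≤ kbar) {lam : ℕ → ℝ} (hlam : ∀ k < kbar, 0 < lam k)
    {mu : ℝ} (hmu : 0 < mu) {pibar : ℕ → ℝ} {k : ℕ} (h1 : 1 ≤ k) (h2 : k ≤ kbar) :
    statWeight kbar lam mu pibar k * nextType kbar lam mu false k = cw lam mu pibar k := by
  rcases lt_or_eq_of_le h2 with h | h
  · rw [statWeight_mid h1 h, nextType_mid_false h1 h]
    have hl : 0 < lam k := hlam k h
    have hne : lam k + mu ≠ 0 := by positivity
    field_simp
  · subst h
    rw [statWeight_top hk, nextType_top_false hk hmu, mul_one]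

-- E2 : r_k f(1|k) = (lam k / mu) c_k for 1 ≤ k < kbar
lemma rs_eq {kbar : ℕ} {lam : ℕ → ℝ} (hlam : ∀ k < kbar, 0 < lam k)
    {mu : ℝ} (hmu : 0 < mu) {pibar : ℕ → ℝ} {k : ℕ} (h1 : 1 ≤ k) (h2 : k < kbar) :
    statWeight kbar lam mu pibar k * nextType kbar lam mu true k
      = lam k / mu * cw lam mu pibar k := by
  rw [statWeight_mid h1 h2, nextType_mid_true h1 h2]
  have hl : 0 < lam k := hlam k h2
  have hne : lam k + mu ≠ 0 := by positivity
  field_simp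

lemma balance {kbar : ℕ} (hk : 2 ≤ kbar) {lam : ℕ → ℝ} (hlam : ∀ k < kbar, 0 < lam k)
    {mu : ℝ} (hmu : 0 < mu) {pibar : ℕ → ℝ} (hpibar : ∀ k < kbar, pibar k ∈ Set.Icc (0:ℝ) 1)
    {j : ℕ} (hj : j ≤ kbar) :
    (if 1 ≤ j then
        statWeight kbar lam mu pibar (j-1) * nextType kbar lam mu true (j-1) * pibar (j-1)
      else 0)
    + (if j < kbar then
        statWeight kbar lam mu pibar j * nextType kbar lam mu true j * (1 - pibar j) else 0)
    + (if j < kbar then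
        statWeight kbar lam mu pibar (j+1) * nextType kbar lam mu false (j+1) else 0)
    = statWeight kbar lam mu pibar j := by
  have hmu' : mu ≠ 0 := ne_of_gt hmu
  -- first summand equals cw j when 1 ≤ j ≤ kbar
  have hfirst : ∀ i : ℕ, 1 ≤ i → i ≤ kbar →
      statWeight kbar lam mu pibar (i-1) * nextType kbar lam mu true (i-1) * pibar (i-1)
        = cw lam mu pibar i := by
    intro i hi1 hi2
    rcases Nat.eq_or_lt_of_le hi1 with h | h
    · rw [← h]
      simp only [Nat.sub_self]
      rw [nextType_zero_true hk hlam]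
      simp [statWeight, cw]
    · -- i ≥ 2
      obtain ⟨i', rfl⟩ : ∃ i', i = i' + 1 := ⟨i - 1, by omega⟩
      have hi1' : 1 ≤ i' := by omega
      have hi2' : i' < kbar := by omega
      simp only [Nat.add_sub_cancel]
      rw [rs_eq hlam hmu hi1' hi2', cw_succ hi1']
      ring
  rcases Nat.eq_zero_or_pos j with h0 | h0
  · subst h0
    have hlt : 0 < kbar := by omega
    simp only [if_pos hlt, if_neg (by omega : ¬ 1 ≤ 0), zero_add]
    rw [rt_eq hk hlam hmu le_rfl (by omega), cw_one]
    rw [nextType_zero_true hk hlam]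
    simp [statWeight]
  · rcases lt_or_eq_of_le hj with h | h
    · -- 1 ≤ j < kbar
      rw [if_pos (show 1 ≤ j by omega), if_pos h, if_pos h]
      rw [hfirst j h0 hj, rs_eq hlam hmu h0 h,
        rt_eq hk hlam hmu (by omega) (by omega), cw_succ h0, statWeight_mid h0 h]
      field_simp
      ring
    · subst h
      rw [if_pos (show 1 ≤ j by omega), if_neg (lt_irrefl _), if_neg (lt_irrefl _), add_zero, add_zero]
      rw [hfirst j h0 le_rfl, statWeight_top hk]

lemma sum_ite_shift {n j : ℕ} (hj : j ≤ n) (g : ℕ → ℝ) :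
    ∑ k ∈ Finset.range n, (if j = k + 1 then g k else 0) = if 1 ≤ j then g (j-1) else 0 := by
  rcases j with _ | i
  · simp
  · have h1 : ∀ k, (if i + 1 = k + 1 then g k else 0) = (if i = k then g k else 0) := by
      intro k; simp
    rw [Finset.sum_congr rfl fun k _ => h1 k, Finset.sum_ite_eq]
    have : i ∈ Finset.range n := Finset.mem_range.mpr (by omega)
    simp [this]

lemma sum_ite_eq' {n j : ℕ} (g : ℕ → ℝ) :
    ∑ k ∈ Finset.range n, (if j = k then g k else 0) = if j < n then g j else 0 := by
  rw [Finset.sum_ite_eq]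
  simp [Finset.mem_range]

/-- The vector `d(a,k) = (r_k / Σ_m r_m) f(a|k)` is a
stationary probability distribution of the embedded `M_n/M/1` chain. -/
theorem embedded_queue_stationary_distribution
    (kbar : ℕ) (hk : 2 ≤ kbar)
    (lam : ℕ → ℝ) (hlam : ∀ k < kbar, 0 < lam k)
    (mu : ℝ) (hmu : 0 < mu)
    (pibar : ℕ → ℝ) (hpibar : ∀ k < kbar, pibar k ∈ Set.Icc (0:ℝ) 1) :
    (∑ z : Bool × Fin (kbar + 1),
        (statWeight kbar lam mu pibar (z.2 : ℕ) /
            ∑ m ∈ Finset.range (kbar + 1), statWeight kbar lam mu pibar m) *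
          nextType kbar lam mu z.1 (z.2 : ℕ) = 1) ∧
    ∀ z' : Bool × Fin (kbar + 1),
      ∑ z : Bool × Fin (kbar + 1),
          ((statWeight kbar lam mu pibar (z.2 : ℕ) /
              ∑ m ∈ Finset.range (kbar + 1), statWeight kbar lam mu pibar m) *
            nextType kbar lam mu z.1 (z.2 : ℕ)) *
          queueTrans kbar lam mu pibar z z' =
        (statWeight kbar lam mu pibar (z'.2 : ℕ) /
            ∑ m ∈ Finset.range (kbar + 1), statWeight kbar lam mu pibar m) *
          nextType kbar lam mu z'.1 (z'.2 : ℕ) := by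
  have hRpos := sumR_pos hk hlam hmu hpibar
  have hRne : (∑ m ∈ Finset.range (kbar + 1), statWeight kbar lam mu pibar m) ≠ 0 :=
    ne_of_gt hRpos
  constructor
  · rw [Fintype.sum_prod_type_right]
    have h1 : ∀ k : Fin (kbar + 1),
        (∑ a : Bool, (statWeight kbar lam mu pibar (k : ℕ) /
            ∑ m ∈ Finset.range (kbar + 1), statWeight kbar lam mu pibar m) *
          nextType kbar lam mu a (k : ℕ))
        = statWeight kbar lam mu pibar (k : ℕ) /
            ∑ m ∈ Finset.range (kbar + 1), statWeight kbar lam mu pibar m := by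
      intro k
      rw [Fintype.sum_bool, ← mul_add,
        nextType_add hk hlam hmu (Nat.lt_succ_iff.mp k.isLt), mul_one]
    rw [Finset.sum_congr rfl fun k _ => h1 k, ← Finset.sum_div,
      Fin.sum_univ_eq_sum_range (fun m => statWeight kbar lam mu pibar m),
      div_self hRne]
  · rintro ⟨a', j'⟩
    obtain ⟨j, hjlt⟩ := j'
    have hj : j ≤ kbar := Nat.lt_succ_iff.mp hjlt
    rw [Fintype.sum_prod_type, Fintype.sum_bool]
    simp only [queueTrans, Fin.ext_iff, if_true, Bool.false_eq_true, if_false]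
    set R := ∑ m ∈ Finset.range (kbar + 1), statWeight kbar lam mu pibar m with hRdef
    set r := statWeight kbar lam mu pibar with hrdef
    set f := nextType kbar lam mu with hfdef
    rw [Fin.sum_univ_eq_sum_range (fun k =>
        r k / R * f true k *
          if k < kbar then
            (if j = k + 1 then pibar k * f a' (k + 1) else 0) +
              if j = k then (1 - pibar k) * f a' k else 0
          else if j = k then f a' k else 0),
      Fin.sum_univ_eq_sum_range (fun k =>
        r k / R * f false k *
          if 0 < k then if j = k - 1 then f a' (k - 1) else 0
          else if j = k then f a' k else 0)]
    -- True-part sum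
    have htrue : (∑ k ∈ Finset.range (kbar + 1),
        (r k / R * f true k *
          if k < kbar then
            (if j = k + 1 then pibar k * f a' (k + 1) else 0) +
              if j = k then (1 - pibar k) * f a' k else 0
          else if j = k then f a' k else 0))
        = (if 1 ≤ j then r (j-1) / R * f true (j-1) * (pibar (j-1) * f a' (j-1+1)) else 0)
          + (if j < kbar then r j / R * f true j * ((1 - pibar j) * f a' j) else 0) := by
      rw [Finset.sum_range_succ]
      have hlast : r kbar / R * f true kbar *
          (if kbar < kbar then
            (if j = kbar + 1 then pibar kbar * f a' (kbar + 1) else 0) +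
              if j = kbar then (1 - pibar kbar) * f a' kbar else 0
          else if j = kbar then f a' kbar else 0) = 0 := by
        rw [hfdef, nextType_top_true]
        ring
      rw [hlast, add_zero]
      have hcongr : ∀ k ∈ Finset.range kbar,
          (r k / R * f true k *
            if k < kbar then
              (if j = k + 1 then pibar k * f a' (k + 1) else 0) +
                if j = k then (1 - pibar k) * f a' k else 0
            else if j = k then f a' k else 0)
          = (if j = k + 1 then r k / R * f true k * (pibar k * f a' (k + 1)) else 0)
            + (if j = k then r k / R * f true k * ((1 - pibar k) * f a' k) else 0) := by
        intro k hkmem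
        rw [if_pos (Finset.mem_range.mp hkmem), mul_add, mul_ite, mul_zero, mul_ite, mul_zero]
      rw [Finset.sum_congr rfl hcongr, Finset.sum_add_distrib,
        sum_ite_shift hj (fun k => r k / R * f true k * (pibar k * f a' (k + 1))),
        sum_ite_eq' (fun k => r k / R * f true k * ((1 - pibar k) * f a' k))]
    -- False-part sum
    have hfalse : (∑ k ∈ Finset.range (kbar + 1),
        (r k / R * f false k *
          if 0 < k then if j = k - 1 then f a' (k - 1) else 0
          else if j = k then f a' k else 0))
        = (if j < kbar then r (j+1) / R * f false (j+1) * f a' j else 0) := by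
      rw [Finset.sum_range_succ']
      have h0 : r 0 / R * f false 0 *
          (if 0 < 0 then if j = 0 - 1 then f a' (0 - 1) else 0
          else if j = 0 then f a' 0 else 0) = 0 := by
        rw [hfdef, nextType_zero_false]
        ring
      rw [h0, add_zero]
      have hcongr : ∀ i ∈ Finset.range kbar,
          (r (i+1) / R * f false (i+1) *
            if 0 < i + 1 then if j = i + 1 - 1 then f a' (i + 1 - 1) else 0
            else if j = i + 1 then f a' (i + 1) else 0)
          = (if j = i then r (i+1) / R * f false (i+1) * f a' i else 0) := by
        intro i _
        rw [if_pos (Nat.succ_pos i)]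
        simp only [Nat.add_sub_cancel]
        rw [mul_ite, mul_zero]
      rw [Finset.sum_congr rfl hcongr,
        sum_ite_eq' (fun i => r (i+1) / R * f false (i+1) * f a' i)]
    rw [htrue, hfalse]
    have hb := balance hk hlam hmu hpibar hj
    rw [← hrdef, ← hfdef] at hb
    rcases Nat.eq_zero_or_pos j with h0 | h0
    · subst h0
      rw [if_neg (by omega : ¬ (1:ℕ) ≤ 0), if_pos (by omega : 0 < kbar),
        if_pos (by omega : 0 < kbar)]
      rw [if_neg (by omega : ¬ (1:ℕ) ≤ 0), if_pos (by omega : 0 < kbar),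
        if_pos (by omega : 0 < kbar), zero_add] at hb
      linear_combination (f a' 0 / R) * hb
    · have hj1 : j - 1 + 1 = j := by omega
      rcases lt_or_eq_of_le hj with hlt | heq
      · rw [if_pos (show 1 ≤ j by omega), if_pos hlt, if_pos hlt, hj1]
        rw [if_pos (show 1 ≤ j by omega), if_pos hlt, if_pos hlt] at hb
        linear_combination (f a' j / R) * hb
      · subst heq
        rw [if_pos (show 1 ≤ j by omega), if_neg (lt_irrefl j), if_neg (lt_irrefl j), hj1]
        rw [if_pos (show 1 ≤ j by omega), if_neg (lt_irrefl j), if_neg (lt_irrefl j),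
          add_zero, add_zero] at hb
        linear_combination (f a' j / R) * hb
end

section
/- For the embedded M_n/M/1 chain with capacity k̄ ≥ 2, let 0 < λ_min ≤ λ_max < ∞ and 0 < μ_min ≤ μ_max < ∞. For parameters λ = (λ_0,…,λ_{k̄−1}) ∈ [λ_min, λ_max]^{k̄}, μ ∈ [μ_min, μ_max], and π̄ ∈ [0,1]^{k̄}, define the queue-length stationary weights d^†_{λ,μ,π̄}(k) := r_k / Σ_{m=0}^{k̄} r_m, where r_0 := 1; r_1 := (λ_1 + μ)·π̄_0/μ; r_k := ((λ_k + μ)·π̄_0/μ)·Π_{m=1}^{k−1}(λ_m·π̄_m/μ) for 2 ≤ k ≤ k̄−1; r_{k̄} := π̄_0·Π_{m=1}^{k̄−1}(λ_m·π̄_m/μ). Then there exists a finite constant C, depending only on k̄, λ_min, λ_max, μ_min, μ_max, such that for all π̄ ∈ [0,1]^{k̄} and all parameter vectors (λ, μ) and (λ', μ') in the box [λ_min, λ_max]^{k̄} × [μ_min, μ_max], max_{0 ≤ k ≤ k̄} | d^†_{λ,μ,π̄}(k) − d^†_{λ',μ',π̄}(k) | ≤ C·( max_{0 ≤ m ≤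 k̄−1} |λ_m − λ'_m| + |μ − μ'| ); that is, the stationary distribution is Lipschitz in the arrival and service rates, uniformly over admission probabilities. -/
/-- The stationary queue-length distribution `d†(k) = r_k / Σ_m r_m`. -/
noncomputable def statDist (kbar : ℕ) (lam : ℕ → ℝ) (mu : ℝ)
    (pibar : ℕ → ℝ) (k : ℕ) : ℝ :=
  statWeight kbar lam mu pibar k /
    ∑ m ∈ Finset.range (kbar + 1), statWeight kbar lam mu pibar m

lemma abs_prod_le_pow (s : Finset ℕ) (f : ℕ → ℝ) (K : ℝ)
    (hf : ∀ m ∈ s, |f m| ≤ K) : |∏ m ∈ s, f m| ≤ K ^ s.card := by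
  calc |∏ m ∈ s, f m| = ∏ m ∈ s, |f m| := by rw [Finset.abs_prod]
    _ ≤ ∏ _m ∈ s, K := Finset.prod_le_prod (fun m _ => abs_nonneg _) hf
    _ = K ^ s.card := Finset.prod_const K

lemma prod_diff_le (s : Finset ℕ) (f g : ℕ → ℝ) (K δ : ℝ) (hK : 1 ≤ K) (hδ : 0 ≤ δ)
    (hf : ∀ m ∈ s, |f m| ≤ K) (hg : ∀ m ∈ s, |g m| ≤ K)
    (hfg : ∀ m ∈ s, |f m - g m| ≤ δ) :
    |∏ m ∈ s, f m - ∏ m ∈ s, g m| ≤ K ^ s.card * s.card * δ := by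
  induction s using Finset.cons_induction with
  | empty => simp
  | cons a s ha ih =>
    have hPf := abs_prod_le_pow s f K (fun m hm => hf m (Finset.mem_cons_of_mem hm))
    have hih := ih (fun m hm => hf m (Finset.mem_cons_of_mem hm))
      (fun m hm => hg m (Finset.mem_cons_of_mem hm))
      (fun m hm => hfg m (Finset.mem_cons_of_mem hm))
    have hga : |g a| ≤ K := hg a (Finset.mem_cons_self a s)
    have hfga : |f a - g a| ≤ δ := hfg a (Finset.mem_cons_self a s)
    rw [Finset.prod_cons, Finset.prod_cons, Finset.card_cons]
    have key : f a * ∏ m ∈ s, f m - g a * ∏ m ∈ s, g m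
        = (f a - g a) * ∏ m ∈ s, f m + g a * (∏ m ∈ s, f m - ∏ m ∈ s, g m) := by ring
    have hKc : (1:ℝ) ≤ K ^ s.card := one_le_pow₀ hK
    have hn : (0:ℝ) ≤ (s.card : ℝ) := Nat.cast_nonneg _
    calc |f a * ∏ m ∈ s, f m - g a * ∏ m ∈ s, g m|
        ≤ |(f a - g a) * ∏ m ∈ s, f m| + |g a * (∏ m ∈ s, f m - ∏ m ∈ s, g m)| := by
          rw [key]; exact abs_add_le _ _
      _ = |f a - g a| * |∏ m ∈ s, f m| + |g a| * |∏ m ∈ s, f m - ∏ m ∈ s, g m| := by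
          rw [abs_mul, abs_mul]
      _ ≤ δ * K ^ s.card + K * (K ^ s.card * s.card * δ) := by
          have h1 : |f a - g a| * |∏ m ∈ s, f m| ≤ δ * K ^ s.card :=
            mul_le_mul hfga hPf (abs_nonneg _) hδ
          have h2 : |g a| * |∏ m ∈ s, f m - ∏ m ∈ s, g m| ≤ K * (K ^ s.card * s.card * δ) :=
            mul_le_mul hga hih (abs_nonneg _) (le_trans zero_le_one hK)
          linarith
      _ ≤ K ^ (s.card + 1) * ((s.card : ℝ) + 1) * δ := by
          rw [pow_succ]
          nlinarith [mul_nonneg (mul_nonneg hδ (le_trans zero_le_one hKc)) (sub_nonneg.2 hK)]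
      _ = K ^ (s.card + 1) * ((s.card + 1 : ℕ) : ℝ) * δ := by push_cast; ring

lemma ratio_lip (lmax mmin a a' b b' : ℝ) (hm0 : 0 < mmin)
    (ha' : a' ≤ lmax) (ha'0 : 0 ≤ a')
    (hb : mmin ≤ b) (hb' : mmin ≤ b') :
    |a / b - a' / b'| ≤ |a - a'| / mmin + lmax * |b - b'| / mmin ^ 2 := by
  have hb0 : 0 < b := lt_of_lt_of_le hm0 hb
  have hb'0 : 0 < b' := lt_of_lt_of_le hm0 hb'
  have hbb' : 0 < b * b' := mul_pos hb0 hb'0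
  rw [div_sub_div _ _ hb0.ne' hb'0.ne', abs_div, abs_of_pos hbb', div_le_iff₀ hbb']
  have key : |a * b' - b * a'| ≤ |a - a'| * b' + a' * |b - b'| := by
    have e : a * b' - b * a' = (a - a') * b' + a' * (b' - b) := by ring
    rw [e]
    calc |(a - a') * b' + a' * (b' - b)| ≤ |(a - a') * b'| + |a' * (b' - b)| := abs_add_le _ _
      _ = |a - a'| * b' + a' * |b - b'| := by
          rw [abs_mul, abs_mul, abs_of_pos hb'0, abs_of_nonneg ha'0, abs_sub_comm b' b]
  have hmm2 : (0:ℝ) < mmin ^ 2 := by positivity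
  have expand : (|a - a'| / mmin + lmax * |b - b'| / mmin ^ 2) * (b * b')
      = (|a - a'| * mmin + lmax * |b - b'|) * (b * b') / mmin ^ 2 := by
    field_simp
  rw [expand, le_div_iff₀ hmm2]
  have h1 : |a - a'| * b' * mmin ^ 2 ≤ |a - a'| * mmin * (b * b') := by
    nlinarith [mul_nonneg (mul_nonneg (mul_nonneg (abs_nonneg (a - a')) hm0.le) hb'0.le)
      (sub_nonneg.2 hb)]
  have h2 : a' * |b - b'| * mmin ^ 2 ≤ lmax * |b - b'| * (b * b') := by
    have hmm : mmin ^ 2 ≤ b * b' := by nlinarith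
    have hl0 : 0 ≤ lmax := le_trans ha'0 ha'
    nlinarith [mul_le_mul_of_nonneg_right (mul_le_mul ha' hmm hmm2.le hl0) (abs_nonneg (b - b'))]
  nlinarith [h1, h2, mul_le_mul_of_nonneg_right key hmm2.le]

lemma statWeight_zero (kbar : ℕ) (lam : ℕ → ℝ) (mu : ℝ) (pibar : ℕ → ℝ) :
    statWeight kbar lam mu pibar 0 = 1 := by simp [statWeight]

lemma statWeight_top_s14 (kbar : ℕ) (lam : ℕ → ℝ) (mu : ℝ) (pibar : ℕ → ℝ) (h0 : kbar ≠ 0) :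
    statWeight kbar lam mu pibar kbar
      = pibar 0 * ∏ m ∈ Finset.Ico 1 kbar, (lam m * pibar m / mu) := by
  simp [statWeight, h0]

lemma statWeight_mid_s14 (kbar : ℕ) (lam : ℕ → ℝ) (mu : ℝ) (pibar : ℕ → ℝ) (j : ℕ)
    (h0 : j ≠ 0) (hk : j ≠ kbar) :
    statWeight kbar lam mu pibar j
      = ((lam j + mu) * pibar 0 / mu) * ∏ m ∈ Finset.Ico 1 j, (lam m * pibar m / mu) := by
  simp [statWeight, h0, hk]

set_option maxHeartbeats 1000000 in
/-- The stationary queue-length distribution of the embedded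
`M_n/M/1` chain is Lipschitz in the arrival and service rates, uniformly over
admission probabilities `π̄ ∈ [0,1]^{k̄}`, on the box
`[λ_min, λ_max]^{k̄} × [μ_min, μ_max]`. -/
theorem embedded_queue_stationary_lipschitz
    (kbar : ℕ) (hk : 2 ≤ kbar)
    (lmin lmax mmin mmax : ℝ)
    (hl0 : 0 < lmin) (hl1 : lmin ≤ lmax) (hm0 : 0 < mmin) (hm1 : mmin ≤ mmax) :
    ∃ C : ℝ,
      ∀ pibar : ℕ → ℝ, (∀ m < kbar, pibar m ∈ Set.Icc (0:ℝ) 1) →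
      ∀ lam lam' : ℕ → ℝ, ∀ mu mu' : ℝ,
        (∀ m < kbar, lam m ∈ Set.Icc lmin lmax) →
        (∀ m < kbar, lam' m ∈ Set.Icc lmin lmax) →
        mu ∈ Set.Icc mmin mmax → mu' ∈ Set.Icc mmin mmax →
        ∀ k ≤ kbar,
          |statDist kbar lam mu pibar k - statDist kbar lam' mu' pibar k| ≤
            C * ((Finset.range kbar).sup'
                (Finset.nonempty_range_iff.mpr (by omega))
                (fun m => |lam m - lam' m|) + |mu - mu'|) := by
  set K : ℝ := 1 + (lmax + mmax) / mmin with hKdef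
  set L : ℝ := 1 / mmin + lmax / mmin ^ 2 with hLdef
  set R : ℝ := K ^ kbar * kbar * L with hRdef
  refine ⟨R + K ^ kbar * ((kbar : ℝ) + 1) * R, ?_⟩
  intro pibar hpi lam lam' mu mu' hlam hlam' hmu hmu' k hkk
  have hl0' : 0 < lmax := lt_of_lt_of_le hl0 hl1
  have hm0' : 0 < mmax := lt_of_lt_of_le hm0 hm1
  have hK1 : 1 ≤ K := by
    rw [hKdef]
    nlinarith [div_nonneg (by linarith : (0:ℝ) ≤ lmax + mmax) hm0.le]
  have hK0 : 0 ≤ K := le_trans zero_le_one hK1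
  have hL0 : 0 < L := by rw [hLdef]; positivity
  have hKk1 : (1:ℝ) ≤ K ^ kbar := one_le_pow₀ hK1
  have hne : (Finset.range kbar).Nonempty := Finset.nonempty_range_iff.mpr (by omega)
  have hmu0 : 0 < mu := lt_of_lt_of_le hm0 hmu.1
  have hmu'0 : 0 < mu' := lt_of_lt_of_le hm0 hmu'.1
  suffices h : |statDist kbar lam mu pibar k - statDist kbar lam' mu' pibar k| ≤
      (R + K ^ kbar * ((kbar : ℝ) + 1) * R) *
        ((Finset.range kbar).sup' hne (fun m => |lam m - lam' m|) + |mu - mu'|) by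
    exact h
  set sup := (Finset.range kbar).sup' hne (fun m => |lam m - lam' m|) with hsupdef
  set ε := sup + |mu - mu'| with hεdef
  have hsup0 : 0 ≤ sup :=
    le_trans (abs_nonneg (lam 0 - lam' 0))
      (Finset.le_sup' (fun m => |lam m - lam' m|)
        (Finset.mem_range.mpr (show 0 < kbar by omega)))
  have hε0 : 0 ≤ ε := by rw [hεdef]; positivity
  have hR0 : 0 ≤ R := by rw [hRdef]; positivity
  -- bounds on individual factors
  have hfacb : ∀ (la : ℕ → ℝ) (m : ℝ), (∀ i < kbar, la i ∈ Set.Icc lmin lmax) →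
      m ∈ Set.Icc mmin mmax → ∀ i < kbar, |la i * pibar i / m| ≤ K := by
    intro la m hla hm i hi
    have hp := hpi i hi
    have hl := hla i hi
    have hm0'' : 0 < m := lt_of_lt_of_le hm0 hm.1
    have hli : 0 ≤ la i := le_trans hl0.le hl.1
    have hpi0 : 0 ≤ pibar i := hp.1
    rw [abs_of_nonneg (by positivity : (0:ℝ) ≤ la i * pibar i / m)]
    calc la i * pibar i / m ≤ lmax * 1 / mmin := by
          gcongr
          all_goals first
            | exact hl.2 | exact hp.2 | exact hm.1
            | linarith [hl.1, hl.2, hm.1, hm.2, hp.1, hp.2]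
      _ ≤ K := by
          rw [hKdef, mul_one]
          have : lmax / mmin ≤ (lmax + mmax) / mmin := by gcongr; linarith
          linarith
  have hpreb : ∀ (la : ℕ → ℝ) (m : ℝ), (∀ i < kbar, la i ∈ Set.Icc lmin lmax) →
      m ∈ Set.Icc mmin mmax → ∀ i < kbar, |(la i + m) * pibar 0 / m| ≤ K := by
    intro la m hla hm i hi
    have hp := hpi 0 (by omega)
    have hl := hla i hi
    have hm0'' : 0 < m := lt_of_lt_of_le hm0 hm.1
    have hp0 : 0 ≤ pibar 0 := hp.1
    have hnn : (0:ℝ) ≤ (la i + m) * pibar 0 / m := by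
      have hlm : 0 ≤ la i + m := by nlinarith [hl.1]
      positivity
    rw [abs_of_nonneg hnn]
    calc (la i + m) * pibar 0 / m ≤ (lmax + mmax) * 1 / mmin := by
          gcongr
          all_goals first
            | exact hl.2 | exact hm.2 | exact hp.2 | exact hm.1
            | linarith [hl.1, hl.2, hm.1, hm.2, hp.1, hp.2]
      _ ≤ K := by rw [hKdef, mul_one]; linarith
  -- Lipschitz of ratio terms
  have hratio : ∀ i < kbar, |lam i / mu - lam' i / mu'| ≤ L * ε := by
    intro i hi
    have h1 := ratio_lip lmax mmin (lam i) (lam' i) mu mu' hm0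
      (hlam' i hi).2 (le_trans hl0.le (hlam' i hi).1) hmu.1 hmu'.1
    have h2 : |lam i - lam' i| ≤ sup := by
      rw [hsupdef]
      exact Finset.le_sup' (fun m => |lam m - lam' m|) (Finset.mem_range.mpr hi)
    have i1 : (0:ℝ) < 1 / mmin := by positivity
    have i2 : (0:ℝ) ≤ lmax / mmin ^ 2 := by positivity
    have e1 : |lam i - lam' i| / mmin ≤ sup / mmin := by gcongr
    have e2 : lmax * |mu - mu'| / mmin ^ 2 = (lmax / mmin ^ 2) * |mu - mu'| := by ring
    rw [hLdef, hεdef]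
    have : sup / mmin = (1 / mmin) * sup := by ring
    nlinarith [mul_nonneg i2 hsup0, mul_nonneg i1.le (abs_nonneg (mu - mu')),
      mul_nonneg i2 (abs_nonneg (mu - mu'))]
  have hfd : ∀ i < kbar, |lam i * pibar i / mu - lam' i * pibar i / mu'| ≤ L * ε := by
    intro i hi
    have hp := hpi i hi
    have e : lam i * pibar i / mu - lam' i * pibar i / mu'
        = pibar i * (lam i / mu - lam' i / mu') := by
      field_simp
    rw [e, abs_mul, abs_of_nonneg hp.1]
    calc pibar i * |lam i / mu - lam' i / mu'| ≤ 1 * (L * ε) :=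
          mul_le_mul hp.2 (hratio i hi) (abs_nonneg _) zero_le_one
      _ = L * ε := one_mul _
  have hpred : ∀ i < kbar,
      |(lam i + mu) * pibar 0 / mu - (lam' i + mu') * pibar 0 / mu'| ≤ L * ε := by
    intro i hi
    have hp := hpi 0 (by omega)
    have e : (lam i + mu) * pibar 0 / mu - (lam' i + mu') * pibar 0 / mu'
        = pibar 0 * (lam i / mu - lam' i / mu') := by
      field_simp; ring
    rw [e, abs_mul, abs_of_nonneg hp.1]
    calc pibar 0 * |lam i / mu - lam' i / mu'| ≤ 1 * (L * ε) :=
          mul_le_mul hp.2 (hratio i hi) (abs_nonneg _) zero_le_one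
      _ = L * ε := one_mul _
  have hLε0 : 0 ≤ L * ε := mul_nonneg hL0.le hε0
  -- bound on weights
  have hwb : ∀ (la : ℕ → ℝ) (m : ℝ), (∀ i < kbar, la i ∈ Set.Icc lmin lmax) →
      m ∈ Set.Icc mmin mmax → ∀ j ≤ kbar, |statWeight kbar la m pibar j| ≤ K ^ kbar := by
    intro la m hla hm j hj
    rcases eq_or_ne j 0 with rfl | hj0
    · rw [statWeight_zero, abs_one]; exact hKk1
    rcases eq_or_ne j kbar with rfl | hjk
    · have hp := hpi 0 (by omega)
      have hP : |∏ i ∈ Finset.Ico 1 j, (la i * pibar i / m)| ≤ K ^ (Finset.Ico 1 j).card :=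
        abs_prod_le_pow _ _ _ (fun i hi => by
          have := Finset.mem_Ico.mp hi
          exact hfacb la m hla hm i (by omega))
      rw [statWeight_top_s14 _ _ _ _ hj0, abs_mul, abs_of_nonneg hp.1]
      calc pibar 0 * |∏ i ∈ Finset.Ico 1 j, (la i * pibar i / m)|
          ≤ 1 * K ^ (Finset.Ico 1 j).card := mul_le_mul hp.2 hP (abs_nonneg _) zero_le_one
        _ = K ^ (Finset.Ico 1 j).card := one_mul _
        _ ≤ K ^ j := pow_le_pow_right₀ hK1 (by rw [Nat.card_Ico]; omega)
    · have hjk' : j < kbar := lt_of_le_of_ne hj hjk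
      have hP : |∏ i ∈ Finset.Ico 1 j, (la i * pibar i / m)| ≤ K ^ (Finset.Ico 1 j).card :=
        abs_prod_le_pow _ _ _ (fun i hi => by
          have := Finset.mem_Ico.mp hi
          exact hfacb la m hla hm i (by omega))
      rw [statWeight_mid_s14 _ _ _ _ _ hj0 hjk, abs_mul]
      calc |(la j + m) * pibar 0 / m| * |∏ i ∈ Finset.Ico 1 j, (la i * pibar i / m)|
          ≤ K * K ^ (Finset.Ico 1 j).card :=
            mul_le_mul (hpreb la m hla hm j hjk') hP (abs_nonneg _) hK0
        _ = K ^ ((Finset.Ico 1 j).card + 1) := by rw [pow_succ]; ring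
        _ ≤ K ^ kbar := pow_le_pow_right₀ hK1 (by rw [Nat.card_Ico]; omega)
  -- Lipschitz of weights
  have hw : ∀ j ≤ kbar, |statWeight kbar lam mu pibar j - statWeight kbar lam' mu' pibar j|
      ≤ R * ε := by
    intro j hj
    rcases eq_or_ne j 0 with rfl | hj0
    · rw [statWeight_zero, statWeight_zero, sub_self, abs_zero]
      exact mul_nonneg hR0 hε0
    have hcard : (Finset.Ico 1 j).card = j - 1 := by rw [Nat.card_Ico]
    have hPd : |∏ i ∈ Finset.Ico 1 j, (lam i * pibar i / mu)
        - ∏ i ∈ Finset.Ico 1 j, (lam' i * pibar i / mu')|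
        ≤ K ^ (j - 1) * ((j - 1 : ℕ) : ℝ) * (L * ε) := by
      rw [← hcard]
      refine prod_diff_le _ _ _ K (L * ε) hK1 hLε0 ?_ ?_ ?_ <;> intro i hi <;>
        have hii := Finset.mem_Ico.mp hi
      · exact hfacb lam mu hlam hmu i (by omega)
      · exact hfacb lam' mu' hlam' hmu' i (by omega)
      · exact hfd i (by omega)
    rcases eq_or_ne j kbar with rfl | hjk
    · have hp := hpi 0 (by omega)
      rw [statWeight_top_s14 _ _ _ _ hj0, statWeight_top_s14 _ _ _ _ hj0, ← mul_sub, abs_mul,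
        abs_of_nonneg hp.1]
      calc pibar 0 * |∏ i ∈ Finset.Ico 1 j, (lam i * pibar i / mu)
            - ∏ i ∈ Finset.Ico 1 j, (lam' i * pibar i / mu')|
          ≤ 1 * (K ^ (j - 1) * ((j - 1 : ℕ) : ℝ) * (L * ε)) :=
            mul_le_mul hp.2 hPd (abs_nonneg _) zero_le_one
        _ = K ^ (j - 1) * ((j - 1 : ℕ) : ℝ) * (L * ε) := one_mul _
        _ ≤ K ^ j * (j : ℝ) * (L * ε) := by
            gcongr
            · omega
            · omega
        _ = R * ε := by rw [hRdef]; ring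
    · have hjk' : j < kbar := lt_of_le_of_ne hj hjk
      obtain ⟨i, rfl⟩ : ∃ i, j = i + 1 := ⟨j - 1, by omega⟩
      rw [statWeight_mid_s14 _ _ _ _ _ hj0 hjk, statWeight_mid_s14 _ _ _ _ _ hj0 hjk]
      have hci : ((i + 1) - 1 : ℕ) = i := by omega
      rw [hci] at hPd
      set P := ∏ m ∈ Finset.Ico 1 (i + 1), (lam m * pibar m / mu) with hP
      set P' := ∏ m ∈ Finset.Ico 1 (i + 1), (lam' m * pibar m / mu') with hP'
      have hPb : |P| ≤ K ^ i := by
        rw [hP]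
        have h := abs_prod_le_pow (Finset.Ico 1 (i+1)) (fun m => lam m * pibar m / mu) K
          (fun m hm => by
            have hmm := Finset.mem_Ico.mp hm
            exact hfacb lam mu hlam hmu m (by omega))
        rw [Nat.card_Ico] at h
        simpa using h
      have hpre' : |(lam' (i+1) + mu') * pibar 0 / mu'| ≤ K :=
        hpreb lam' mu' hlam' hmu' (i+1) hjk'
      have hdpre : |(lam (i+1) + mu) * pibar 0 / mu - (lam' (i+1) + mu') * pibar 0 / mu'|
          ≤ L * ε := hpred (i+1) hjk'
      have key : (lam (i+1) + mu) * pibar 0 / mu * P - (lam' (i+1) + mu') * pibar 0 / mu' * P'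
          = ((lam (i+1) + mu) * pibar 0 / mu - (lam' (i+1) + mu') * pibar 0 / mu') * P
            + (lam' (i+1) + mu') * pibar 0 / mu' * (P - P') := by ring
      have hKi : (0:ℝ) ≤ K ^ i := pow_nonneg hK0 i
      have hKi1 : (1:ℝ) ≤ K ^ i := one_le_pow₀ hK1
      have hin : (0:ℝ) ≤ (i:ℝ) := Nat.cast_nonneg i
      calc |(lam (i+1) + mu) * pibar 0 / mu * P - (lam' (i+1) + mu') * pibar 0 / mu' * P'|
          ≤ |(lam (i+1) + mu) * pibar 0 / mu - (lam' (i+1) + mu') * pibar 0 / mu'| * |P|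
            + |(lam' (i+1) + mu') * pibar 0 / mu'| * |P - P'| := by
            rw [key]
            refine le_trans (abs_add_le _ _) ?_
            rw [abs_mul, abs_mul]
        _ ≤ (L * ε) * K ^ i + K * (K ^ i * (i : ℝ) * (L * ε)) := by
            have h1 := mul_le_mul hdpre hPb (abs_nonneg _) hLε0
            have h2 := mul_le_mul hpre' hPd (abs_nonneg _) hK0
            linarith [h1, h2]
        _ ≤ K ^ kbar * (kbar : ℝ) * (L * ε) := by
            have step1 : (L * ε) * K ^ i + K * (K ^ i * (i : ℝ) * (L * ε))
                = K ^ i * (1 + K * i) * (L * ε) := by ring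
            have step2 : (1 : ℝ) + K * i ≤ K * ((i:ℝ) + 1) := by nlinarith
            have step3 : K ^ i * (K * ((i:ℝ)+1)) = K ^ (i+1) * ((i:ℝ)+1) := by
              rw [pow_succ]; ring
            have step4 : K ^ (i+1) ≤ K ^ kbar := pow_le_pow_right₀ hK1 (by omega)
            have step5 : ((i:ℝ)+1) ≤ (kbar : ℝ) := by exact_mod_cast hjk'.le
            rw [step1]
            calc K ^ i * (1 + K * i) * (L * ε) ≤ K ^ i * (K * ((i:ℝ)+1)) * (L * ε) := by
                  gcongr
              _ = K ^ (i+1) * ((i:ℝ)+1) * (L * ε) := by rw [step3]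
              _ ≤ K ^ kbar * (kbar : ℝ) * (L * ε) := by gcongr
        _ = R * ε := by rw [hRdef]; ring
  -- nonnegativity of weights
  have hwpos : ∀ (la : ℕ → ℝ) (m : ℝ), (∀ i < kbar, la i ∈ Set.Icc lmin lmax) →
      m ∈ Set.Icc mmin mmax → ∀ j ≤ kbar, 0 ≤ statWeight kbar la m pibar j := by
    intro la m hla hm j hj
    have hm0'' : 0 < m := lt_of_lt_of_le hm0 hm.1
    have hPnn : 0 ≤ ∏ i ∈ Finset.Ico 1 j, (la i * pibar i / m) := by
      refine Finset.prod_nonneg (fun i hi => ?_)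
      have hii := Finset.mem_Ico.mp hi
      have hil : i < kbar := by omega
      have ha1 : 0 ≤ la i := le_trans hl0.le (hla i hil).1
      have ha2 : 0 ≤ pibar i := (hpi i hil).1
      positivity
    rcases eq_or_ne j 0 with rfl | hj0
    · rw [statWeight_zero]; exact zero_le_one
    rcases eq_or_ne j kbar with rfl | hjk
    · rw [statWeight_top_s14 _ _ _ _ hj0]
      exact mul_nonneg (hpi 0 (by omega)).1 hPnn
    · rw [statWeight_mid_s14 _ _ _ _ _ hj0 hjk]
      have hjl : j < kbar := lt_of_le_of_ne hj hjk
      have h1 := (hla j hjl).1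
      have h2 : 0 ≤ pibar 0 := (hpi 0 (by omega)).1
      have : 0 ≤ (la j + m) * pibar 0 / m := by
        have hlm : 0 ≤ la j + m := by nlinarith
        positivity
      exact mul_nonneg this hPnn
  set S := ∑ m ∈ Finset.range (kbar + 1), statWeight kbar lam mu pibar m with hSdef
  set S' := ∑ m ∈ Finset.range (kbar + 1), statWeight kbar lam' mu' pibar m with hS'def
  have hS1 : 1 ≤ S := by
    rw [hSdef]
    have h0 : statWeight kbar lam mu pibar 0 = 1 := statWeight_zero _ _ _ _
    calc (1:ℝ) = statWeight kbar lam mu pibar 0 := h0.symm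
      _ ≤ S := Finset.single_le_sum
          (fun i hi => hwpos lam mu hlam hmu i (by
            have := Finset.mem_range.mp hi; omega))
          (Finset.mem_range.mpr (by omega))
  have hS'1 : 1 ≤ S' := by
    rw [hS'def]
    have h0 : statWeight kbar lam' mu' pibar 0 = 1 := statWeight_zero _ _ _ _
    calc (1:ℝ) = statWeight kbar lam' mu' pibar 0 := h0.symm
      _ ≤ S' := Finset.single_le_sum
          (fun i hi => hwpos lam' mu' hlam' hmu' i (by
            have := Finset.mem_range.mp hi; omega))
          (Finset.mem_range.mpr (by omega))
  have hS0 : 0 < S := lt_of_lt_of_le one_pos hS1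
  have hS'0 : 0 < S' := lt_of_lt_of_le one_pos hS'1
  have hSd : |S - S'| ≤ ((kbar : ℝ) + 1) * (R * ε) := by
    rw [hSdef, hS'def, ← Finset.sum_sub_distrib]
    calc |∑ m ∈ Finset.range (kbar + 1),
          (statWeight kbar lam mu pibar m - statWeight kbar lam' mu' pibar m)|
        ≤ ∑ m ∈ Finset.range (kbar + 1),
          |statWeight kbar lam mu pibar m - statWeight kbar lam' mu' pibar m| :=
          Finset.abs_sum_le_sum_abs _ _
      _ ≤ ∑ _m ∈ Finset.range (kbar + 1), R * ε :=
          Finset.sum_le_sum (fun i hi => hw i (by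
            have := Finset.mem_range.mp hi; omega))
      _ = ((kbar : ℝ) + 1) * (R * ε) := by
          rw [Finset.sum_const, Finset.card_range]; push_cast; ring
  -- final assembly
  have hWk := hw k hkk
  have hW'b := hwb lam' mu' hlam' hmu' k hkk
  set r := statWeight kbar lam mu pibar k with hrdef
  set r' := statWeight kbar lam' mu' pibar k with hr'def
  have hid : r / S - r' / S' = (r - r') / S + r' * (S' - S) / (S * S') := by
    field_simp
    ring
  rw [statDist, statDist, ← hSdef, ← hS'def, ← hrdef, ← hr'def, hid]
  calc |(r - r') / S + r' * (S' - S) / (S * S')|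
      ≤ |(r - r') / S| + |r' * (S' - S) / (S * S')| := abs_add_le _ _
    _ = |r - r'| / S + |r'| * |S - S'| / (S * S') := by
        rw [abs_div, abs_div, abs_mul, abs_of_pos hS0, abs_of_pos (mul_pos hS0 hS'0),
          abs_sub_comm S' S]
    _ ≤ |r - r'| + |r'| * |S - S'| := by
        have e1 : |r - r'| / S ≤ |r - r'| := div_le_self (abs_nonneg _) hS1
        have e2 : |r'| * |S - S'| / (S * S') ≤ |r'| * |S - S'| :=
          div_le_self (mul_nonneg (abs_nonneg _) (abs_nonneg _))
            (one_le_mul_of_one_le_of_one_le hS1 hS'1)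
        linarith
    _ ≤ R * ε + K ^ kbar * (((kbar : ℝ) + 1) * (R * ε)) := by
        have h2 : |r'| * |S - S'| ≤ K ^ kbar * (((kbar : ℝ) + 1) * (R * ε)) :=
          mul_le_mul hW'b hSd (abs_nonneg _) (le_trans zero_le_one hKk1)
        linarith
    _ = (R + K ^ kbar * ((kbar : ℝ) + 1) * R) * ε := by ring
end

section
/- In the finite-state exogenous MDP with reward and inter-event-time outcomes, there exist constants c_s ∈ ℝ and p_s ∈ [0,1] for each s ∈ S such that the policy π*(x,s) := 1{τ_R(x,s) > c_s} + p_s·1{τ_R(x,s) = c_s} satisfies θ(π*) ≥ θ(π) for every measurable policy π : X × S → [0,1]; that is, the long-run reward rate is maximized by a state-specific threshold rule in the direct reward effect τ_R. Furthermore, if for every s ∈ S the pushforward of P_X under x ↦ τ_R(x,s) is atomless, then there exist constants c_s ∈ ℝ such that the deterministic policy π*(x,s) := 1{τ_R(x,s) > c_s} satisfies θ(π*) ≥ θ(π) for every measurable policy π. -/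
open MeasureTheory

section Setup

variable {X : Type*} [MeasurableSpace X] {S : Type*} [Fintype S]

/-- `d` is a stationary probability vector for `M_π`. -/
def IsStationaryProbVec (PX : Measure X) (PS : S → Bool → S → ℝ)
    (π : X → S → ℝ) (d : S → ℝ) : Prop :=
  (∀ s, 0 ≤ d s) ∧ (∑ s : S, d s = 1) ∧
    ∀ s' : S, ∑ s : S, d s * transMat PX PS π s s' = d s'

/-- The long-run reward rate `θ(π) = μ_R(π) / μ_Δ(π)`. -/
noncomputable def rewardRate (PX : Measure X) (ηR : Bool → X → S → ℝ)
    (ηΔ : X → S → ℝ) (dstat : (X → S → ℝ) → S → ℝ) (π : X → S → ℝ) : ℝ :=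
  (∑ s : S, dstat π s *
      ∫ x, (π x s * ηR true x s + (1 - π x s) * ηR false x s) ∂PX) /
    (∑ s : S, dstat π s * ∫ x, ηΔ x s ∂PX)

end Setup

namespace OTP

open MeasureTheory Set


variable {X : Type*} [MeasurableSpace X] (PX : Measure X) [IsProbabilityMeasure PX]

lemma int_bdd {f : X → ℝ} (hf : Measurable f) {C : ℝ} (h : ∀ x, |f x| ≤ C) :
    Integrable f PX :=
  Integrable.mono' (integrable_const C) hf.aestronglyMeasurable
    (Filter.Eventually.of_forall fun x => by simpa using h x)

lemma integral_ite (P : X → Prop) [DecidablePred P] (hs : MeasurableSet {x | P x}) :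
    ∫ x, (if P x then (1:ℝ) else 0) ∂PX = (PX {x | P x}).toReal := by
  have h : (fun x => if P x then (1:ℝ) else 0) = Set.indicator {x | P x} (fun _ => (1:ℝ)) := by
    ext x
    by_cases h : P x <;> simp [Set.indicator_apply, Set.mem_setOf_eq, h]
  rw [h, integral_indicator_const (1:ℝ) hs, smul_eq_mul, mul_one]
  rfl

/-- The threshold policy function. -/
noncomputable def thrPol (τ : X → ℝ) (c p : ℝ) (x : X) : ℝ :=
  (if c < τ x then (1:ℝ) else 0) + p * (if τ x = c then (1:ℝ) else 0)

lemma thrPol_measurable {τ : X → ℝ} (hτ : Measurable τ) (c p : ℝ) :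
    Measurable (thrPol τ c p) := by
  apply Measurable.add
  · exact Measurable.ite (measurableSet_lt measurable_const hτ) measurable_const measurable_const
  · exact Measurable.const_mul
      (Measurable.ite (hτ (measurableSet_singleton c)) measurable_const measurable_const) p

lemma thrPol_mem_Icc {τ : X → ℝ} {c p : ℝ} (hp : p ∈ Set.Icc (0:ℝ) 1) (x : X) :
    thrPol τ c p x ∈ Set.Icc (0:ℝ) 1 := by
  obtain ⟨hp0, hp1⟩ := hp
  unfold thrPol
  split_ifs with h1 h2 h2 <;> constructor <;> first
    | linarith [lt_irrefl (τ x) (h2 ▸ h1)]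
    | linarith

lemma integral_thrPol {τ : X → ℝ} (hτ : Measurable τ) (c p : ℝ) :
    ∫ x, thrPol τ c p x ∂PX =
      (PX {x | c < τ x}).toReal + p * (PX {x | τ x = c}).toReal := by
  unfold thrPol
  rw [integral_add, integral_const_mul,
    integral_ite PX (fun x => c < τ x) (measurableSet_lt measurable_const hτ),
    integral_ite PX (fun x => τ x = c) (hτ (measurableSet_singleton c))]
  · exact int_bdd PX (Measurable.ite (measurableSet_lt measurable_const hτ) measurable_const
      measurable_const) (C := 1) (fun x => by split_ifs <;> simp)
  · apply Integrable.const_mul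
    exact int_bdd PX (Measurable.ite (hτ (measurableSet_singleton c)) measurable_const
      measurable_const) (C := 1) (fun x => by split_ifs <;> simp)

lemma mul_int {τ : X → ℝ} (hτ : Measurable τ) {M : ℝ} (hb : ∀ x, |τ x| ≤ M)
    {g : X → ℝ} (hg : Measurable g) (hg01 : ∀ x, g x ∈ Set.Icc (0:ℝ) 1) :
    Integrable (fun x => g x * τ x) PX := by
  apply int_bdd PX (hg.mul hτ) (C := M)
  intro x
  obtain ⟨h0, h1⟩ := hg01 x
  calc |g x * τ x| = |g x| * |τ x| := abs_mul _ _
    _ ≤ 1 * M := mul_le_mul (abs_le.2 ⟨by linarith, h1⟩) (hb x) (abs_nonneg _) zero_le_one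
    _ = M := one_mul M

/-- Neyman–Pearson: the threshold policy maximizes `∫ π τ` among policies of the
same level. -/
lemma thrPol_NP {τ : X → ℝ} (hτ : Measurable τ) {M : ℝ} (hb : ∀ x, |τ x| ≤ M)
    {c p : ℝ} (hp : p ∈ Set.Icc (0:ℝ) 1)
    {π : X → ℝ} (hπm : Measurable π) (hπ01 : ∀ x, π x ∈ Set.Icc (0:ℝ) 1)
    (hlev : ∫ x, π x ∂PX = ∫ x, thrPol τ c p x ∂PX) :
    ∫ x, π x * τ x ∂PX ≤ ∫ x, thrPol τ c p x * τ x ∂PX := by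
  have hthm : Measurable (thrPol τ c p) := thrPol_measurable hτ c p
  have I1 : Integrable (fun x => thrPol τ c p x * τ x) PX :=
    mul_int PX hτ hb hthm (thrPol_mem_Icc hp)
  have I2 : Integrable (fun x => π x * τ x) PX := mul_int PX hτ hb hπm hπ01
  have I3 : Integrable (thrPol τ c p) PX :=
    int_bdd PX hthm (C := 1) (fun x => by
      obtain ⟨h0, h1⟩ := thrPol_mem_Icc (τ := τ) (c := c) hp x
      rw [abs_le]; exact ⟨by linarith, h1⟩)
  have I4 : Integrable π PX :=
    int_bdd PX hπm (C := 1) (fun x => by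
      obtain ⟨h0, h1⟩ := hπ01 x
      rw [abs_le]; exact ⟨by linarith, h1⟩)
  have key : 0 ≤ ∫ x, (thrPol τ c p x - π x) * (τ x - c) ∂PX := by
    apply integral_nonneg
    intro x
    obtain ⟨hπ0, hπ1⟩ := hπ01 x
    have key : 0 ≤ (thrPol τ c p x - π x) * (τ x - c) := by
      rcases lt_trichotomy c (τ x) with h | h | h
      · have h2 : τ x ≠ c := h.ne'
        unfold thrPol
        rw [if_pos h, if_neg h2]
        nlinarith
      · have hz : τ x - c = 0 := by rw [← h]; ring
        rw [hz, mul_zero]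
      · have h1 : ¬ c < τ x := not_lt.2 h.le
        have h2 : τ x ≠ c := h.ne
        unfold thrPol
        rw [if_neg h1, if_neg h2]
        nlinarith
    simpa using key
  have expand : ∀ x, (thrPol τ c p x - π x) * (τ x - c) =
      thrPol τ c p x * τ x - π x * τ x - c * (thrPol τ c p x - π x) := fun x => by ring
  rw [show (fun x => (thrPol τ c p x - π x) * (τ x - c)) =
      fun x => thrPol τ c p x * τ x - π x * τ x - c * (thrPol τ c p x - π x) from
    funext expand] at key
  have I12 : Integrable (fun x => thrPol τ c p x * τ x - π x * τ x) PX := I1.sub I2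
  have I34 : Integrable (fun x => c * (thrPol τ c p x - π x)) PX := (I3.sub I4).const_mul c
  rw [integral_sub I12 I34, integral_sub I1 I2, integral_const_mul, integral_sub I3 I4] at key
  rw [hlev] at key
  linarith

/-- The optimal value `G` is Lipschitz in the level `a`. -/
lemma G_lipschitz {τ : X → ℝ} (hτ : Measurable τ) {M : ℝ} (hM : 0 ≤ M)
    (hb : ∀ x, |τ x| ≤ M) (G : ℝ → ℝ) (Apol : ℝ → X → ℝ)
    (hAm : ∀ a ∈ Set.Icc (0:ℝ) 1, Measurable (Apol a))
    (hA01 : ∀ a ∈ Set.Icc (0:ℝ) 1, ∀ x, Apol a x ∈ Set.Icc (0:ℝ) 1)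
    (hAa : ∀ a ∈ Set.Icc (0:ℝ) 1, ∫ x, Apol a x ∂PX = a)
    (hGdef : ∀ a ∈ Set.Icc (0:ℝ) 1, G a = ∫ x, Apol a x * τ x ∂PX)
    (hNP : ∀ a ∈ Set.Icc (0:ℝ) 1, ∀ π : X → ℝ, Measurable π →
      (∀ x, π x ∈ Set.Icc (0:ℝ) 1) → (∫ x, π x ∂PX) = a →
      ∫ x, π x * τ x ∂PX ≤ G a) :
    ∀ a ∈ Set.Icc (0:ℝ) 1, ∀ b ∈ Set.Icc (0:ℝ) 1, |G a - G b| ≤ M * |a - b| := by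
  have Iτ : Integrable τ PX := int_bdd PX hτ hb
  -- one-sided estimates for a ≤ b
  have side : ∀ a ∈ Set.Icc (0:ℝ) 1, ∀ b ∈ Set.Icc (0:ℝ) 1, a ≤ b →
      G b ≤ G a + M * (b - a) ∧ G a ≤ G b + M * (b - a) := by
    intro a ha b hb' hab
    obtain ⟨ha0, ha1⟩ := ha
    obtain ⟨hb0, hb1⟩ := hb'
    constructor
    · -- G b ≤ G a + M (b - a), via scaling down
      rcases eq_or_lt_of_le hb0 with h0 | h0
      · have hae : a = b := le_antisymm hab (by linarith)
        rw [hae]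
        nlinarith
      · -- b > 0
        set π := fun x => (a/b) * Apol b x with hπ
        have hπm : Measurable π := (hAm b ⟨hb0, hb1⟩).const_mul _
        have hfrac : a/b ∈ Set.Icc (0:ℝ) 1 :=
          ⟨div_nonneg ha0 hb0, (div_le_one h0).2 hab⟩
        have hπ01 : ∀ x, π x ∈ Set.Icc (0:ℝ) 1 := by
          intro x
          obtain ⟨g0, g1⟩ := hA01 b ⟨hb0, hb1⟩ x
          exact ⟨mul_nonneg hfrac.1 g0,
            le_trans (mul_le_mul hfrac.2 g1 g0 zero_le_one) (by norm_num)⟩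
        have hπint : ∫ x, π x ∂PX = a := by
          rw [hπ]
          rw [integral_const_mul, hAa b ⟨hb0, hb1⟩, div_mul_cancel₀ a h0.ne']
        have hNPa := hNP a ⟨ha0, ha1⟩ π hπm hπ01 hπint
        have hπτ : ∫ x, π x * τ x ∂PX = (a/b) * G b := by
          rw [hGdef b ⟨hb0, hb1⟩]
          simp only [hπ, mul_assoc]
          rw [integral_const_mul]
        rw [hπτ] at hNPa
        -- |G b| ≤ M * b
        have hIAb : Integrable (Apol b) PX :=
          int_bdd PX (hAm b ⟨hb0, hb1⟩) (C := 1) (fun x => by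
            obtain ⟨g0, g1⟩ := hA01 b ⟨hb0, hb1⟩ x
            rw [abs_le]; exact ⟨by linarith, g1⟩)
        have hGb : G b ≤ M * b := by
          rw [hGdef b ⟨hb0, hb1⟩]
          have hmono : ∫ x, Apol b x * τ x ∂PX ≤ ∫ x, Apol b x * M ∂PX := by
            apply integral_mono (mul_int PX hτ hb (hAm b ⟨hb0, hb1⟩) (hA01 b ⟨hb0, hb1⟩))
              (hIAb.mul_const M)
            intro x
            obtain ⟨g0, g1⟩ := hA01 b ⟨hb0, hb1⟩ x
            have := (abs_le.1 (hb x)).2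
            simp only
            nlinarith
          have heq : ∫ x, Apol b x * M ∂PX = M * b := by
            rw [integral_mul_const, hAa b ⟨hb0, hb1⟩]; ring
          linarith
        rw [div_mul_eq_mul_div, div_le_iff₀ h0] at hNPa
        nlinarith [mul_le_mul_of_nonneg_left hGb (sub_nonneg.2 hab)]
    · -- G a ≤ G b + M (b - a), via mixing with 1
      rcases eq_or_lt_of_le ha1 with h1 | h1
      · have hbe : b = a := le_antisymm (by rw [h1]; exact hb1) hab
        rw [hbe]
        nlinarith
      · set lam := (b - a)/(1 - a) with hlam
        have hl0 : 0 ≤ lam := div_nonneg (by linarith) (by linarith)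
        have hl1 : lam ≤ 1 := (div_le_one (by linarith)).2 (by linarith)
        set π := fun x => Apol a x + lam * (1 - Apol a x) with hπ
        have hAmes := hAm a ⟨ha0, ha1⟩
        have hπm : Measurable π :=
          hAmes.add ((measurable_const.sub hAmes).const_mul _)
        have hπ01 : ∀ x, π x ∈ Set.Icc (0:ℝ) 1 := by
          intro x
          obtain ⟨g0, g1⟩ := hA01 a ⟨ha0, ha1⟩ x
          constructor
          · have : 0 ≤ lam * (1 - Apol a x) := mul_nonneg hl0 (by linarith)
            simp only [hπ]; linarith
          · have : lam * (1 - Apol a x) ≤ 1 * (1 - Apol a x) :=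
              mul_le_mul_of_nonneg_right hl1 (by linarith)
            simp only [hπ]; linarith
        have hIA : Integrable (Apol a) PX :=
          int_bdd PX hAmes (C := 1) (fun x => by
            obtain ⟨g0, g1⟩ := hA01 a ⟨ha0, ha1⟩ x
            rw [abs_le]; exact ⟨by linarith, g1⟩)
        have IL : Integrable (fun x => lam * (1 - Apol a x)) PX := by
          have h1A : Integrable (fun x => (1:ℝ) - Apol a x) PX := (integrable_const 1).sub hIA
          exact h1A.const_mul lam
        have hπint : ∫ x, π x ∂PX = b := by
          simp only [hπ]
          rw [integral_add hIA IL, integral_const_mul, integral_sub (integrable_const 1) hIA,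
            hAa a ⟨ha0, ha1⟩]
          simp only [integral_const, measure_univ, ENNReal.toReal_one, smul_eq_mul, one_mul, probReal_univ]
          have hne : (1:ℝ) - a ≠ 0 := by linarith
          rw [hlam, div_mul_cancel₀ _ hne]
          ring
        have hNPb := hNP b ⟨hb0, hb1⟩ π hπm hπ01 hπint
        have hIAτ : Integrable (fun x => Apol a x * τ x) PX :=
          mul_int PX hτ hb hAmes (hA01 a ⟨ha0, ha1⟩)
        have hI1τ : Integrable (fun x => (1 - Apol a x) * τ x) PX := by
          have : (fun x => (1 - Apol a x) * τ x) = fun x => τ x - Apol a x * τ x := by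
            ext x; ring
          rw [this]; exact Iτ.sub hIAτ
        have hπτ : ∫ x, π x * τ x ∂PX =
            G a + lam * ∫ x, (1 - Apol a x) * τ x ∂PX := by
          have : (fun x => π x * τ x) =
              fun x => Apol a x * τ x + lam * ((1 - Apol a x) * τ x) := by
            ext x; simp only [hπ]; ring
          rw [this, integral_add hIAτ (hI1τ.const_mul _), integral_const_mul,
            hGdef a ⟨ha0, ha1⟩]
        have hlow : -(M * (1 - a)) ≤ ∫ x, (1 - Apol a x) * τ x ∂PX := by
          have h1 : ∫ x, -((1 - Apol a x) * M) ∂PX ≤ ∫ x, (1 - Apol a x) * τ x ∂PX := by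
            apply integral_mono (by
              apply Integrable.neg
              have : (fun x => (1 - Apol a x) * M) = fun x => M - Apol a x * M := by
                ext x; ring
              rw [this]
              exact (integrable_const M).sub (hIA.mul_const M)) hI1τ
            intro x
            obtain ⟨g0, g1⟩ := hA01 a ⟨ha0, ha1⟩ x
            have hbx := abs_le.1 (hb x)
            simp only
            nlinarith
          have h2 : ∫ x, -((1 - Apol a x) * M) ∂PX = -(M * (1 - a)) := by
            have : (fun x => -((1 - Apol a x) * M)) = fun x => Apol a x * M - M := by
              ext x; ring
            rw [this, integral_sub (hIA.mul_const M) (integrable_const M),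
              integral_mul_const, hAa a ⟨ha0, ha1⟩]
            simp only [integral_const, measure_univ, ENNReal.toReal_one, smul_eq_mul, one_mul, probReal_univ]
            ring
          linarith
        have hlam1a : lam * (1 - a) = b - a := by
          have hne : (1:ℝ) - a ≠ 0 := by linarith
          rw [hlam, div_mul_cancel₀ _ hne]
        rw [hπτ] at hNPb
        have h4 : lam * -(M * (1 - a)) = -(M * (b - a)) := by rw [← hlam1a]; ring
        linarith [mul_le_mul_of_nonneg_left hlow hl0, h4, hNPb]
  intro a ha b hb'
  rcases le_total a b with hab | hab
  · obtain ⟨h1, h2⟩ := side a ha b hb' hab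
    rw [abs_sub_comm a b, abs_of_nonneg (sub_nonneg.2 hab), abs_le]
    constructor <;> linarith
  · obtain ⟨h1, h2⟩ := side b hb' a ha hab
    rw [abs_of_nonneg (sub_nonneg.2 hab), abs_le]
    constructor <;> linarith

lemma exists_threshold (τ : X → ℝ) (hτ : Measurable τ) (M : ℝ) (hM : 0 ≤ M)
    (hb : ∀ x, |τ x| ≤ M) {a : ℝ} (ha : a ∈ Set.Icc (0:ℝ) 1) :
    ∃ c p : ℝ, p ∈ Set.Icc (0:ℝ) 1 ∧
      (PX {x | c < τ x}).toReal + p * (PX {x | τ x = c}).toReal = a := by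
  obtain ⟨ha0, ha1⟩ := ha
  have hfin : ∀ t : ℝ, PX {x | t < τ x} ≠ ⊤ := fun t => measure_ne_top _ _
  set F : ℝ → ℝ := fun t => (PX {x | t < τ x}).toReal with hF
  have hanti : ∀ {t u : ℝ}, t ≤ u → F u ≤ F t := by
    intro t u htu
    exact ENNReal.toReal_mono (hfin t) (measure_mono fun x hx => lt_of_le_of_lt htu hx)
  set A : Set ℝ := {t | F t ≤ a} ∩ Set.Ici (-(M+1)) with hA
  have hne : (M+1) ∈ A := by
    constructor
    · have h0 : {x | M+1 < τ x} = (∅ : Set X) := by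
        ext x; simp only [Set.mem_setOf_eq, Set.mem_empty_iff_false, iff_false, not_lt]
        linarith [(abs_le.1 (hb x)).2]
      simp only [Set.mem_setOf_eq, hF, h0, measure_empty, ENNReal.toReal_zero]
      exact ha0
    · simp only [Set.mem_Ici]; linarith
  have hbdd : BddBelow A := ⟨-(M+1), fun t ht => ht.2⟩
  set c := sInf A with hc
  -- claim 1 : F c ≤ a
  have hFc : F c ≤ a := by
    have hunion : {x | c < τ x} = ⋃ n : ℕ, {x | c + 1/(n+1) < τ x} := by
      ext x
      simp only [Set.mem_setOf_eq, Set.mem_iUnion]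
      constructor
      · intro hx
        obtain ⟨n, hn⟩ := exists_nat_one_div_lt (sub_pos.2 hx)
        exact ⟨n, by linarith⟩
      · rintro ⟨n, hn⟩
        have : (0:ℝ) < 1/(n+1) := by positivity
        linarith
    have hmono : Monotone fun n : ℕ => {x | c + 1/(n+1) < τ x} := by
      intro m n hmn x hx
      simp only [Set.mem_setOf_eq] at hx ⊢
      have : (1:ℝ)/(n+1) ≤ 1/(m+1) := by
        apply one_div_le_one_div_of_le (by positivity)
        exact_mod_cast by exact_mod_cast Nat.succ_le_succ hmn
      linarith
    have hsup : PX {x | c < τ x} = ⨆ n : ℕ, PX {x | c + 1/(n+1) < τ x} := by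
      rw [hunion]
      exact hmono.measure_iUnion
    have hle : ∀ n : ℕ, PX {x | c + 1/(n+1) < τ x} ≤ ENNReal.ofReal a := by
      intro n
      have hcn : c < c + 1/(n+1) := by
        have : (0:ℝ) < 1/(n+1) := by positivity
        linarith
      obtain ⟨t, htA, htlt⟩ := exists_lt_of_csInf_lt ⟨_, hne⟩ hcn
      have : F (c + 1/(n+1)) ≤ a := le_trans (hanti htlt.le) htA.1
      rwa [← ENNReal.le_ofReal_iff_toReal_le (hfin _) ha0] at this
    have : PX {x | c < τ x} ≤ ENNReal.ofReal a := by
      rw [hsup]; exact iSup_le hle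
    rwa [ENNReal.le_ofReal_iff_toReal_le (hfin _) ha0] at this
  -- claim 2 : a ≤ PX {c ≤ τ}
  have hFc2 : a ≤ (PX {x | c ≤ τ x}).toReal := by
    have hinter : {x | c ≤ τ x} = ⋂ n : ℕ, {x | c - 1/(n+1) < τ x} := by
      ext x
      simp only [Set.mem_setOf_eq, Set.mem_iInter]
      constructor
      · intro hx n
        have : (0:ℝ) < 1/(n+1) := by positivity
        linarith
      · intro hx
        by_contra hlt
        push_neg at hlt
        obtain ⟨n, hn⟩ := exists_nat_one_div_lt (sub_pos.2 hlt)
        have := hx n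
        linarith
    have hdir : Directed (· ⊇ ·) fun n : ℕ => {x | c - 1/(n+1) < τ x} := by
      apply Antitone.directed_ge
      intro m n hmn x hx
      simp only [Set.mem_setOf_eq] at hx ⊢
      have : (1:ℝ)/(n+1) ≤ 1/(m+1) := by
        apply one_div_le_one_div_of_le (by positivity)
        exact_mod_cast Nat.succ_le_succ hmn
      linarith
    have hmeas : ∀ n : ℕ, MeasurableSet {x | c - 1/(n+1) < τ x} := fun n =>
      measurableSet_lt measurable_const hτ
    have hinf : PX {x | c ≤ τ x} = ⨅ n : ℕ, PX {x | c - 1/(n+1) < τ x} := by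
      rw [hinter]
      exact Directed.measure_iInter (fun n => (hmeas n).nullMeasurableSet) hdir ⟨0, measure_ne_top _ _⟩
    have hge : ∀ n : ℕ, ENNReal.ofReal a ≤ PX {x | c - 1/(n+1) < τ x} := by
      intro n
      have hcn : c - 1/(n+1) < c := by
        have : (0:ℝ) < 1/(n+1) := by positivity
        linarith
      have hnotA : c - 1/(n+1) ∉ A := fun hmem => absurd (csInf_le hbdd hmem) (not_le.2 hcn)
      have haF : a ≤ F (c - 1/(n+1)) := by
        rcases Classical.em (c - 1/(n+1) ∈ Set.Ici (-(M+1))) with hIci | hIci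
        · have : ¬ (F (c - 1/(n+1)) ≤ a) := fun h => hnotA ⟨h, hIci⟩
          linarith [not_le.1 this]
        · -- t < -(M+1) : F t = 1
          simp only [Set.mem_Ici, not_le] at hIci
          have huniv : {x | c - 1/(n+1) < τ x} = Set.univ := by
            ext x; simp only [Set.mem_setOf_eq, Set.mem_univ, iff_true]
            have := (abs_le.1 (hb x)).1
            linarith
          have : F (c - 1/(n+1)) = 1 := by
            simp only [hF, huniv, measure_univ, ENNReal.toReal_one]
          linarith
      rw [← ENNReal.ofReal_le_iff_le_toReal (hfin _)] at haF
      exact haF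
    have : ENNReal.ofReal a ≤ PX {x | c ≤ τ x} := by
      rw [hinf]; exact le_iInf hge
    rw [ENNReal.ofReal_le_iff_le_toReal (measure_ne_top _ _)] at this
    exact this
  -- split {c ≤ τ} = {c < τ} ∪ {τ = c}
  have hsplit : (PX {x | c ≤ τ x}).toReal = F c + (PX {x | τ x = c}).toReal := by
    have hdisj : Disjoint {x | c < τ x} {x | τ x = c} := by
      rw [Set.disjoint_left]
      intro x hx hx'
      simp only [Set.mem_setOf_eq] at hx hx'
      exact absurd hx' (ne_of_gt hx)
      -- τ x = c but c < τ x
    have hun : {x | c ≤ τ x} = {x | c < τ x} ∪ {x | τ x = c} := by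
      ext x
      simp only [Set.mem_setOf_eq, Set.mem_union]
      constructor
      · intro h; rcases lt_or_eq_of_le h with h | h
        · exact Or.inl h
        · exact Or.inr h.symm
      · rintro (h | h)
        · exact h.le
        · exact h.ge
    rw [hun, measure_union hdisj (hτ (measurableSet_singleton c)),
      ENNReal.toReal_add (measure_ne_top _ _) (measure_ne_top _ _)]
  set q := (PX {x | τ x = c}).toReal with hq
  have hq0 : 0 ≤ q := ENNReal.toReal_nonneg
  rw [hsplit] at hFc2
  rcases eq_or_lt_of_le hq0 with hq' | hq'
  · exact ⟨c, 0, ⟨le_refl 0, zero_le_one⟩, by rw [← hq, ← hq']; linarith⟩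
  · refine ⟨c, (a - F c)/q, ⟨div_nonneg (by linarith) hq0, ?_⟩, ?_⟩
    · rw [div_le_one hq']; linarith
    · rw [← hq]; field_simp
      linarith [show F c = (PX {x | c < τ x}).toReal from rfl]

end OTP


/-- In the finite-state exogenous MDP with reward and
inter-event-time outcomes, the long-run reward rate `θ` is maximized by a
state-specific threshold rule in the direct reward effect `τ_R`, with
randomized tie-breaking; if moreover `τ_R(X,s)` is continuously distributed for
every `s`, a deterministic threshold rule is optimal. -/
theorem optimal_threshold_policy_reward_rate
    {X : Type*} [MeasurableSpace X] (PX : Measure X) [IsProbabilityMeasure PX]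
    {S : Type*} [Fintype S] [Nonempty S]
    (PS : S → Bool → S → ℝ)
    (hPS_nonneg : ∀ s w s', 0 ≤ PS s w s')
    (hPS_sum : ∀ s w, ∑ s' : S, PS s w s' = 1)
    (ηR : Bool → X → S → ℝ)
    (hηR_meas : ∀ w s, Measurable fun x => ηR w x s)
    (BR : ℝ) (hηR_bdd : ∀ w x s, |ηR w x s| ≤ BR)
    (ηΔ : X → S → ℝ)
    (hηΔ_meas : ∀ s : S, Measurable fun x => ηΔ x s)
    (BΔ : ℝ) (hηΔ_bdd : ∀ x s, |ηΔ x s| ≤ BΔ)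
    (δ : ℝ) (hδ : 0 < δ) (hηΔ_lb : ∀ x s, δ ≤ ηΔ x s)
    (dstat : (X → S → ℝ) → S → ℝ)
    (hd_stat : ∀ π : X → S → ℝ, IsPolicy π → IsStationaryProbVec PX PS π (dstat π))
    (hd_uniq : ∀ π : X → S → ℝ, IsPolicy π →
      ∀ d : S → ℝ, IsStationaryProbVec PX PS π d → d = dstat π) :
    (∃ (c : S → ℝ) (p : S → ℝ), (∀ s, p s ∈ Set.Icc (0:ℝ) 1) ∧
      ∀ π : X → S → ℝ, IsPolicy π →
        rewardRate PX ηR ηΔ dstat π ≤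
          rewardRate PX ηR ηΔ dstat (fun x s =>
            (if c s < ηR true x s - ηR false x s then (1:ℝ) else 0) +
              p s * (if ηR true x s - ηR false x s = c s then (1:ℝ) else 0))) ∧
    ((∀ (s : S) (t : ℝ), PX {x | ηR true x s - ηR false x s = t} = 0) →
      ∃ c : S → ℝ,
        ∀ π : X → S → ℝ, IsPolicy π →
          rewardRate PX ηR ηΔ dstat π ≤
            rewardRate PX ηR ηΔ dstat (fun x s =>
              if c s < ηR true x s - ηR false x s then (1:ℝ) else 0)) := by
  classical
  -- the direct effect
  set τ : S → X → ℝ := fun s x => ηR true x s - ηR false x s with hτdef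
  have hτm : ∀ s, Measurable (τ s) := fun s => (hηR_meas true s).sub (hηR_meas false s)
  set M : ℝ := 2 * |BR| with hMdef
  have hMnn : (0:ℝ) ≤ M := by positivity
  have hτb : ∀ s x, |τ s x| ≤ M := by
    intro s x
    have h1 := abs_le.1 (hηR_bdd true x s)
    have h2 := abs_le.1 (hηR_bdd false x s)
    have h3 := le_abs_self BR
    rw [abs_le]
    constructor <;> simp only [hτdef, hMdef] <;> [linarith; linarith]
  -- choose thresholds for each state and level
  have hch : ∀ (s : S) (a : ℝ), a ∈ Set.Icc (0:ℝ) 1 → ∃ c p : ℝ,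
      p ∈ Set.Icc (0:ℝ) 1 ∧
      (PX {x | c < τ s x}).toReal + p * (PX {x | τ s x = c}).toReal = a :=
    fun s a ha => OTP.exists_threshold PX (τ s) (hτm s) M hMnn (hτb s) ha
  choose! cc pp hpmem hlev using hch
  have hlev' : ∀ (s : S), ∀ a ∈ Set.Icc (0:ℝ) 1,
      ∫ x, OTP.thrPol (τ s) (cc s a) (pp s a) x ∂PX = a := by
    intro s a ha
    rw [OTP.integral_thrPol PX (hτm s)]
    exact hlev s a ha
  set G : S → ℝ → ℝ :=
    fun s a => ∫ x, OTP.thrPol (τ s) (cc s a) (pp s a) x * τ s x ∂PX with hGdef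
  have hNP : ∀ (s : S), ∀ a ∈ Set.Icc (0:ℝ) 1, ∀ π : X → ℝ, Measurable π →
      (∀ x, π x ∈ Set.Icc (0:ℝ) 1) → (∫ x, π x ∂PX) = a →
      ∫ x, π x * τ s x ∂PX ≤ G s a := by
    intro s a ha π hm h01 hi
    apply OTP.thrPol_NP PX (hτm s) (hτb s) (hpmem s a ha) hm h01
    rw [hi, hlev' s a ha]
  have hGlip : ∀ s : S, ∀ a ∈ Set.Icc (0:ℝ) 1, ∀ b ∈ Set.Icc (0:ℝ) 1,
      |G s a - G s b| ≤ M * |a - b| := by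
    intro s
    exact OTP.G_lipschitz PX (hτm s) hMnn (hτb s) (G s)
      (fun a => OTP.thrPol (τ s) (cc s a) (pp s a))
      (fun a _ => OTP.thrPol_measurable (hτm s) _ _)
      (fun a ha x => OTP.thrPol_mem_Icc (hpmem s a ha) x)
      (hlev' s) (fun a _ => rfl) (hNP s)
  have hGcont : ∀ s : S, ContinuousOn (G s) (Set.Icc (0:ℝ) 1) := by
    intro s
    apply LipschitzOnWith.continuousOn (K := Real.toNNReal M)
    apply LipschitzOnWith.of_dist_le_mul
    intro a ha b hb
    rw [Real.dist_eq, Real.dist_eq]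
    calc |G s a - G s b| ≤ M * |a - b| := hGlip s a ha b hb
      _ ≤ Real.toNNReal M * |a - b| := by
          apply mul_le_mul_of_nonneg_right _ (abs_nonneg _)
          rw [Real.coe_toNNReal M hMnn]
  -- integrability facts
  have hIηΔ : ∀ s : S, Integrable (fun x => ηΔ x s) PX :=
    fun s => OTP.int_bdd PX (hηΔ_meas s) (fun x => hηΔ_bdd x s)
  have hIηRf : ∀ s : S, Integrable (fun x => ηR false x s) PX :=
    fun s => OTP.int_bdd PX (hηR_meas false s) (C := BR) (fun x => hηR_bdd false x s)
  have hΔδ : ∀ s : S, δ ≤ ∫ x, ηΔ x s ∂PX := by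
    intro s
    have h1 : ∫ (_ : X), δ ∂PX ≤ ∫ x, ηΔ x s ∂PX :=
      integral_mono (integrable_const δ) (hIηΔ s) (fun x => hηΔ_lb x s)
    rwa [integral_const, probReal_univ, one_smul] at h1
  -- levels of a policy
  have haIcc : ∀ π : X → S → ℝ, IsPolicy π → ∀ s : S,
      (∫ x, π x s ∂PX) ∈ Set.Icc (0:ℝ) 1 := by
    intro π hπ s
    obtain ⟨hm, h01⟩ := hπ
    constructor
    · exact integral_nonneg (fun x => (h01 x s).1)
    · have h1 : ∫ x, π x s ∂PX ≤ ∫ (_ : X), (1:ℝ) ∂PX :=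
        integral_mono (OTP.int_bdd PX (hm s) (C := 1)
          (fun x => abs_le.2 ⟨by linarith [(h01 x s).1], (h01 x s).2⟩))
          (integrable_const 1) (fun x => (h01 x s).2)
      rwa [integral_const, probReal_univ, one_smul] at h1
  -- transition matrix depends only on levels
  have htrans : ∀ π : X → S → ℝ, IsPolicy π → ∀ s s' : S,
      transMat PX PS π s s' = (∫ x, π x s ∂PX) * PS s true s'
        + (1 - ∫ x, π x s ∂PX) * PS s false s' := by
    intro π hπ s s'
    obtain ⟨hm, h01⟩ := hπ
    have Iπ : Integrable (fun x => π x s) PX :=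
      OTP.int_bdd PX (hm s) (C := 1)
        (fun x => abs_le.2 ⟨by linarith [(h01 x s).1], (h01 x s).2⟩)
    have I1 : Integrable (fun x => π x s * PS s true s') PX := Iπ.mul_const _
    have I2 : Integrable (fun x => (1 - π x s) * PS s false s') PX := by
      have h1A : Integrable (fun x => (1:ℝ) - π x s) PX := (integrable_const 1).sub Iπ
      exact h1A.mul_const _
    unfold transMat
    rw [integral_add I1 I2, integral_mul_const, integral_mul_const,
      integral_sub (integrable_const 1) Iπ, integral_const, probReal_univ,
      one_smul]
  -- the feasible set K
  set K : Set ((S → ℝ) × (S → ℝ)) :=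
    {q | (∀ s, q.1 s ∈ Set.Icc (0:ℝ) 1) ∧ (∀ s, 0 ≤ q.2 s) ∧ (∑ s : S, q.2 s = 1) ∧
      ∀ s' : S, ∑ s : S, q.2 s * (q.1 s * PS s true s' + (1 - q.1 s) * PS s false s')
        = q.2 s'} with hKdef
  have hKmem : ∀ π : X → S → ℝ, IsPolicy π →
      ((fun s => ∫ x, π x s ∂PX), dstat π) ∈ K := by
    intro π hπ
    obtain ⟨hd0, hd1, hdst⟩ := hd_stat π hπ
    refine ⟨fun s => haIcc π hπ s, hd0, hd1, ?_⟩
    intro s'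
    show ∑ s : S, dstat π s * ((∫ x, π x s ∂PX) * PS s true s'
      + (1 - ∫ x, π x s ∂PX) * PS s false s') = dstat π s'
    rw [← hdst s']
    exact Finset.sum_congr rfl (fun s _ => by rw [htrans π hπ s s'])
  -- K is compact
  have hKsub : K ⊆ (Set.Icc (0:(S → ℝ)) 1) ×ˢ (Set.Icc (0:(S → ℝ)) 1) := by
    rintro ⟨av, dv⟩ ⟨h1, h2, h3, _⟩
    constructor
    · rw [Set.mem_Icc]
      exact ⟨fun s => (h1 s).1, fun s => (h1 s).2⟩
    · rw [Set.mem_Icc]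
      refine ⟨fun s => h2 s, fun s => ?_⟩
      calc dv s ≤ ∑ i : S, dv i :=
            Finset.single_le_sum (fun i _ => h2 i) (Finset.mem_univ s)
        _ = 1 := h3
  have hKcl : IsClosed K := by
    have e : K = (⋂ s : S, {q : (S → ℝ) × (S → ℝ) | q.1 s ∈ Set.Icc (0:ℝ) 1}) ∩
        ((⋂ s : S, {q : (S → ℝ) × (S → ℝ) | 0 ≤ q.2 s}) ∩
          ({q : (S → ℝ) × (S → ℝ) | ∑ s : S, q.2 s = 1} ∩
            ⋂ s' : S, {q : (S → ℝ) × (S → ℝ) |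
              ∑ s : S, q.2 s * (q.1 s * PS s true s' + (1 - q.1 s) * PS s false s')
                = q.2 s'})) := by
      rw [hKdef]
      ext q
      simp only [Set.mem_inter_iff, Set.mem_iInter, Set.mem_setOf_eq]
    rw [e]
    refine IsClosed.inter (isClosed_iInter fun s => ?_)
      (IsClosed.inter (isClosed_iInter fun s => ?_)
        (IsClosed.inter ?_ (isClosed_iInter fun s' => ?_)))
    · exact IsClosed.preimage ((continuous_apply s).comp continuous_fst) isClosed_Icc
    · exact isClosed_le continuous_const ((continuous_apply s).comp continuous_snd)
    · exact isClosed_eq (by fun_prop) continuous_const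
    · exact isClosed_eq (by fun_prop) ((continuous_apply s').comp continuous_snd)
  have hKcomp : IsCompact K :=
    IsCompact.of_isClosed_subset (isCompact_Icc.prod isCompact_Icc) hKcl hKsub
  have hKne : K.Nonempty := by
    have hpol0 : IsPolicy (fun (_ : X) (_ : S) => (0:ℝ)) :=
      ⟨fun s => measurable_const, fun x s => ⟨le_refl 0, zero_le_one⟩⟩
    exact ⟨_, hKmem _ hpol0⟩
  -- the objective
  set φ : (S → ℝ) × (S → ℝ) → ℝ :=
    fun q => (∑ s : S, q.2 s * (G s (q.1 s) + ∫ x, ηR false x s ∂PX)) /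
      (∑ s : S, q.2 s * ∫ x, ηΔ x s ∂PX) with hφdef
  have hden_pos : ∀ q ∈ K, 0 < ∑ s : S, q.2 s * ∫ x, ηΔ x s ∂PX := by
    rintro ⟨av, dv⟩ ⟨h1, h2, h3, h4⟩
    have hd : δ = ∑ s : S, dv s * δ := by rw [← Finset.sum_mul, h3, one_mul]
    calc (0:ℝ) < δ := hδ
      _ = ∑ s : S, dv s * δ := hd
      _ ≤ ∑ s : S, dv s * ∫ x, ηΔ x s ∂PX :=
          Finset.sum_le_sum (fun s _ => mul_le_mul_of_nonneg_left (hΔδ s) (h2 s))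
  have hφcont : ContinuousOn φ K := by
    rw [hφdef]
    apply ContinuousOn.div
    · apply continuousOn_finset_sum
      intro s _
      apply ContinuousOn.mul
      · exact ((continuous_apply s).comp continuous_snd).continuousOn
      · apply ContinuousOn.add _ continuousOn_const
        apply (hGcont s).comp (((continuous_apply s).comp continuous_fst).continuousOn)
        intro q hq
        exact hq.1 s
    · exact Continuous.continuousOn (by fun_prop)
    · exact fun q hq => (hden_pos q hq).ne'
  obtain ⟨qs, hqsK, hqsmax⟩ := hKcomp.exists_isMaxOn hKne hφcont
  obtain ⟨hqs1, hqs2, hqs3, hqs4⟩ := hqsK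
  -- the optimal threshold policy
  set πs : X → S → ℝ :=
    fun x s => OTP.thrPol (τ s) (cc s (qs.1 s)) (pp s (qs.1 s)) x with hπsdef
  have hπspol : IsPolicy πs :=
    ⟨fun s => OTP.thrPol_measurable (hτm s) _ _,
     fun x s => OTP.thrPol_mem_Icc (hpmem s (qs.1 s) (hqs1 s)) x⟩
  have hπslev : ∀ s : S, ∫ x, πs x s ∂PX = qs.1 s :=
    fun s => hlev' s (qs.1 s) (hqs1 s)
  have hdπs : qs.2 = dstat πs := by
    apply hd_uniq πs hπspol
    refine ⟨hqs2, hqs3, ?_⟩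
    intro s'
    rw [← hqs4 s']
    refine Finset.sum_congr rfl (fun s _ => ?_)
    rw [htrans πs hπspol s s', hπslev s]
  -- integral decomposition of the reward
  have hint_split : ∀ π : X → S → ℝ, IsPolicy π → ∀ s : S,
      ∫ x, (π x s * ηR true x s + (1 - π x s) * ηR false x s) ∂PX
        = (∫ x, π x s * τ s x ∂PX) + ∫ x, ηR false x s ∂PX := by
    intro π hπ s
    obtain ⟨hm, h01⟩ := hπ
    have heq : (fun x => π x s * ηR true x s + (1 - π x s) * ηR false x s)
        = fun x => π x s * τ s x + ηR false x s := by
      funext x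
      simp only [hτdef]
      ring
    rw [heq, integral_add (OTP.mul_int PX (hτm s) (hτb s) (hm s) (fun x => h01 x s))
      (hIηRf s)]
  -- main bound
  have hmain : ∀ π : X → S → ℝ, IsPolicy π → rewardRate PX ηR ηΔ dstat π ≤ φ qs := by
    intro π hπ
    have hKm := hKmem π hπ
    obtain ⟨hd0, hd1, hdst⟩ := hd_stat π hπ
    have h1 : rewardRate PX ηR ηΔ dstat π ≤ φ ((fun s => ∫ x, π x s ∂PX), dstat π) := by
      unfold rewardRate
      simp only [hφdef]
      have hpos : 0 < ∑ s : S, dstat π s * ∫ x, ηΔ x s ∂PX := by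
        simpa using hden_pos _ hKm
      apply (div_le_div_iff_of_pos_right hpos).2
      apply Finset.sum_le_sum
      intro s _
      rw [hint_split π hπ s]
      exact mul_le_mul_of_nonneg_left
        (add_le_add_left
          (hNP s _ (haIcc π hπ s) _ (hπ.1 s) (fun x => hπ.2 x s) rfl) _)
        (hd0 s)
    exact h1.trans (hqsmax hKm)
  -- value of the threshold policy
  have hπsval : rewardRate PX ηR ηΔ dstat πs = φ qs := by
    unfold rewardRate
    simp only [hφdef, ← hdπs]
    congr 1
    refine Finset.sum_congr rfl (fun s _ => ?_)
    rw [hint_split πs hπspol s]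
  constructor
  · refine ⟨fun s => cc s (qs.1 s), fun s => pp s (qs.1 s),
      fun s => hpmem s (qs.1 s) (hqs1 s), ?_⟩
    intro π hπ
    have h := (hmain π hπ).trans_eq hπsval.symm
    simp only [hπsdef, OTP.thrPol, hτdef] at h
    exact h
  · intro hatom
    refine ⟨fun s => cc s (qs.1 s), ?_⟩
    intro π hπ
    set π0 : X → S → ℝ := fun x s => if cc s (qs.1 s) < τ s x then 1 else 0 with hπ0def
    have hae : ∀ s : S, (fun x => πs x s) =ᵐ[PX] (fun x => π0 x s) := by
      intro s
      have hnull : PX {x | τ s x = cc s (qs.1 s)} = 0 := by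
        simp only [hτdef]
        exact hatom s _
      have hne : ∀ᵐ x ∂PX, τ s x ≠ cc s (qs.1 s) := by
        rw [MeasureTheory.ae_iff]
        simp only [ne_eq, not_not]
        exact hnull
      filter_upwards [hne] with x hx
      simp only [hπsdef, hπ0def, OTP.thrPol, if_neg hx, mul_zero, add_zero]
    have hπ0pol : IsPolicy π0 := by
      constructor
      · intro s
        exact Measurable.ite (measurableSet_lt measurable_const (hτm s))
          measurable_const measurable_const
      · intro x s
        simp only [hπ0def]
        split_ifs <;> norm_num
    have htr0 : ∀ s s' : S, transMat PX PS πs s s' = transMat PX PS π0 s s' := by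
      intro s s'
      unfold transMat
      apply integral_congr_ae
      filter_upwards [hae s] with x hx
      rw [hx]
    have hd0eq : dstat πs = dstat π0 := by
      apply hd_uniq π0 hπ0pol
      obtain ⟨k1, k2, k3⟩ := hd_stat πs hπspol
      refine ⟨k1, k2, fun s' => ?_⟩
      rw [← k3 s']
      exact Finset.sum_congr rfl (fun s _ => by rw [htr0 s s'])
    have hrr : rewardRate PX ηR ηΔ dstat π0 = rewardRate PX ηR ηΔ dstat πs := by
      unfold rewardRate
      rw [← hd0eq]
      congr 1
      refine Finset.sum_congr rfl (fun s _ => ?_)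
      congr 1
      apply integral_congr_ae
      filter_upwards [hae s] with x hx
      rw [← hx]
    have h : rewardRate PX ηR ηΔ dstat π ≤ rewardRate PX ηR ηΔ dstat π0 := by
      rw [hrr]
      exact (hmain π hπ).trans_eq hπsval.symm
    simp only [hπ0def, hτdef] at h
    exact h
end
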